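/- arXiv:1502.06809 — 9 statements merged into one kernel-verified Lean document; each statement's English description precedes it below -/
import Mathlib

section
/- Let C be a linear [n,k,d] code over F_q and L an [n_l, k_l, d_l] linear code over F_q such that n_l divides n and every codeword of C, when partitioned into n/n_l consecutive blocks of length n_l, has each block lying in L. Let ω be the maximum Hamming weight of a codeword of L. Then the block-projection of C (mapping each block to a symbol of F_q^{k_l} via a fixed injective linear encoding of L) is an additive code over the alphabet of size q^{k_l} of length n' = n/n_l, with q^k codewords and minimum distance d' ≥ ⌈d/ω⌉. -/
/-- Projection to an additive code: if every block (of length `n_l`) of every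
codeword of `C` lies in the locality code `L` (given as the range of an injective
linear encoding `E : F^{k_l} → F^{n_l}`), then the block-projection of `C` is an
additive (F-linear) code of length `n' = n/n_l` over the alphabet `F^{k_l}`,
with `q^k` codewords and minimum distance at least `⌈d/ω⌉`, where `ω` bounds the
weight of codewords of `L`. -/
theorem stmt2 {F : Type*} [Field F] [Fintype F] [DecidableEq F]
    {nl kl t k d ω : ℕ}
    (L : Submodule F (Fin nl → F)) (C : Submodule F (Fin t → Fin nl → F))
    (E : (Fin kl → F) →ₗ[F] (Fin nl → F)) (hEinj : Function.Injective E)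
    (hErange : LinearMap.range E = L)
    (hblocks : ∀ c ∈ C, ∀ i, c i ∈ L)
    (hk : Module.finrank F C = k)
    (hωpos : 0 < ω)
    (hω : ∀ x ∈ L, hammingNorm x ≤ ω)
    (hd : ∀ c ∈ C, c ≠ 0 → d ≤ ∑ i, hammingNorm (c i)) :
    ∃ A : Submodule F (Fin t → Fin kl → F),
      (A : Set (Fin t → Fin kl → F)) = {a | (fun i => E (a i)) ∈ C} ∧
      Nat.card A = Fintype.card F ^ k ∧
      ∀ a ∈ A, a ≠ 0 → ⌈(d : ℚ) / (ω : ℚ)⌉ ≤ (hammingNorm a : ℤ) := by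
  classical
  set Φ : (Fin t → Fin kl → F) →ₗ[F] (Fin t → Fin nl → F) :=
    LinearMap.pi (fun i => E.comp (LinearMap.proj i)) with hΦ
  have hΦapp : ∀ a : Fin t → Fin kl → F, Φ a = fun i => E (a i) := fun a => rfl
  have hΦinj : Function.Injective Φ := by
    intro a b hab
    funext i
    apply hEinj
    have := congrFun hab i
    simpa [hΦapp] using this
  refine ⟨C.comap Φ, ?_, ?_, ?_⟩
  · ext a; simp [hΦapp]
  · -- cardinality
    have hbij : Function.Bijective (fun a : C.comap Φ => (⟨Φ a, a.2⟩ : C)) := by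
      constructor
      · intro a b hab
        apply Subtype.ext
        apply hΦinj
        simpa using congrArg Subtype.val hab
      · rintro ⟨c, hc⟩
        have hselect : ∀ i, ∃ y, E y = c i := by
          intro i
          have : c i ∈ L := hblocks c hc i
          rw [← hErange] at this
          exact this
        choose a ha using hselect
        have hΦa : Φ a = c := by funext i; exact ha i
        refine ⟨⟨a, ?_⟩, ?_⟩
        · show Φ a ∈ C; rw [hΦa]; exact hc
        · exact Subtype.ext hΦa
    have h1 : Nat.card (C.comap Φ) = Nat.card C := Nat.card_congr (Equiv.ofBijective _ hbij)
    haveI : Fintype C := Fintype.ofFinite _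
    rw [h1, Nat.card_eq_fintype_card, Module.card_eq_pow_finrank (K := F) (V := C), hk]
  · intro a ha hane
    have hc : Φ a ∈ C := ha
    have hcne : Φ a ≠ 0 := by
      intro h; exact hane (hΦinj (by simpa using h))
    have hdle : d ≤ ∑ i, hammingNorm (Φ a i) := hd _ hc hcne
    have hsum : ∑ i, hammingNorm (Φ a i) ≤ ω * hammingNorm a := by
      have : ∀ i, hammingNorm (Φ a i) ≤ ω * (if a i ≠ 0 then 1 else 0) := by
        intro i
        by_cases h : a i = 0
        · simp [hΦapp, h, map_zero]
        · have hmem : E (a i) ∈ L := hErange ▸ LinearMap.mem_range_self E (a i)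
          simpa [h, hΦapp] using hω _ hmem
      calc ∑ i, hammingNorm (Φ a i) ≤ ∑ i, ω * (if a i ≠ 0 then 1 else 0) :=
            Finset.sum_le_sum fun i _ => this i
        _ = ω * hammingNorm a := by
            rw [← Finset.mul_sum]
            congr 1
            simp [hammingNorm, Finset.sum_ite, Finset.filter_ne']
    have hdω : d ≤ ω * hammingNorm a := hdle.trans hsum
    rw [Int.ceil_le]
    rw [div_le_iff₀ (by exact_mod_cast hωpos)]
    push_cast
    calc (d : ℚ) ≤ (ω * hammingNorm a : ℕ) := by exact_mod_cast hdω
      _ = (hammingNorm a : ℚ) * ω := by push_cast; ring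
end

section
/- Let m be odd with 3 ∣ (2^m+1) and n = 2^m+1. The binary cyclic code of length n with defining set D = {3j mod n : 0 ≤ j < n/3} ∪ C_1 (where C_1 is the 2-cyclotomic coset of 1 mod n) has dimension k = (2/3)(2^m+1) − 2m and minimum distance at least 10. -/
open Polynomial Finset


lemma aux_pow_exp_mod {F : Type*} [Monoid F] {α : F} {n : ℕ} (h : α ^ n = 1) (a : ℕ) :
    α ^ (a % n) = α ^ a := by
  conv_rhs => rw [← Nat.mod_add_div a n, pow_add, pow_mul, h, one_pow, mul_one]

lemma aux_nat_mod (n B X : ℕ) (h1 : 1 ≤ B) (h2 : B ≤ n) (hX : X + B = B * n) :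
    X % n = n - B := by
  have hXz : (X:ℤ) + B = B * n := by exact_mod_cast hX
  have hE : X = (n - B) + (B - 1) * n := by
    zify [h1, h2]; linear_combination hXz
  rw [hE, Nat.add_mul_mod_self_right, Nat.mod_eq_of_lt (by omega)]

lemma aux_pow_mod_high {m n r : ℕ} (hn : n = 2 ^ m + 1) (h1 : 1 ≤ r) (h2 : r ≤ m) :
    2 ^ (m + r) % n = n - 2 ^ r := by
  have hb : 2 ^ r ≤ 2 ^ m := Nat.pow_le_pow_right (by norm_num) h2
  have h1b : 1 ≤ 2 ^ r := Nat.one_le_two_pow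
  exact aux_nat_mod n _ _ h1b (by omega) (by rw [pow_add, hn]; ring)

lemma aux_pow_mod_2m {m n : ℕ} (hn : n = 2 ^ m + 1) (hm : 1 ≤ m) :
    2 ^ (2 * m) % n = 1 := by
  have h1b : 2 ≤ 2 ^ m := by
    calc (2:ℕ) = 2 ^ 1 := rfl
    _ ≤ 2 ^ m := Nat.pow_le_pow_right (by norm_num) hm
  have h : 2 ^ (2 * m) % n = n - (n - 1) := by
    refine aux_nat_mod n (n - 1) _ (by omega) (by omega) ?_
    have h3 : 2 ^ (2 * m) = 2 ^ m * 2 ^ m := by rw [two_mul, pow_add]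
    have h2 : (n - 1) * n = 2 ^ m * 2 ^ m + 2 ^ m := by
      rw [hn, Nat.add_sub_cancel]; ring
    omega
  omega



section D
variable {m n : ℕ}

lemma aux_hn2 (hm : 1 ≤ m) (hn : n = 2 ^ m + 1) : 3 ≤ n ∧ 2 ≤ 2 ^ m := by
  have : 2 ≤ 2 ^ m := by
    calc (2:ℕ) = 2 ^ 1 := rfl
    _ ≤ 2 ^ m := Nat.pow_le_pow_right (by norm_num) hm
  omega

lemma aux_A_val (h3 : 3 ∣ n) {j : ℕ} (hj : j < n / 3) : 3 * j % n = 3 * j :=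
  Nat.mod_eq_of_lt (by omega)

lemma aux_cardA (h3 : 3 ∣ n) :
    ((range (n / 3)).image (fun j => 3 * j % n)).card = n / 3 := by
  rw [Finset.card_image_of_injOn, card_range]
  intro a ha b hb hab
  rw [Finset.mem_coe, mem_range] at ha hb
  simp only at hab
  rw [aux_A_val h3 ha, aux_A_val h3 hb] at hab
  omega

lemma aux_B_low (hm : 1 ≤ m) (hn : n = 2 ^ m + 1) {j : ℕ} (hj : j ≤ m) : 2 ^ j % n = 2 ^ j := by
  have h2 : 2 ^ j ≤ 2 ^ m := Nat.pow_le_pow_right (by norm_num) hj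
  exact Nat.mod_eq_of_lt (by omega)

lemma aux_cardB (hm : 1 ≤ m) (hn : n = 2 ^ m + 1) :
    ((range (2 * m)).image (fun j => 2 ^ j % n)).card = 2 * m := by
  rw [Finset.card_image_of_injOn, card_range]
  intro a ha b hb hab
  rw [Finset.mem_coe, mem_range] at ha hb
  simp only at hab
  have key : ∀ a b : ℕ, a < 2 * m → b < 2 * m → a ≤ m → 2 ^ a % n = 2 ^ b % n → a = b := by
    intro a b ha hb ham hab
    rcases le_or_gt b m with hbm | hbm
    · rw [aux_B_low hm hn ham, aux_B_low hm hn hbm] at hab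
      exact Nat.pow_right_injective (le_refl 2) hab
    · exfalso
      obtain ⟨r, hr1, rfl⟩ : ∃ r, (1 ≤ r ∧ r < m) ∧ b = m + r :=
        ⟨b - m, ⟨by omega, by omega⟩, by omega⟩
      rw [aux_B_low hm hn ham, aux_pow_mod_high hn hr1.1 (by omega)] at hab
      have hrm : 2 ^ r < 2 ^ m := Nat.pow_lt_pow_right (by norm_num) hr1.2
      rcases Nat.eq_zero_or_pos a with rfl | hapos
      · simp only [pow_zero] at hab; omega
      · have d1 : 2 ∣ 2 ^ a := dvd_pow_self 2 (by omega)
        have d2 : 2 ∣ 2 ^ r := dvd_pow_self 2 (by omega)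
        have d3 : 2 ∣ 2 ^ m := dvd_pow_self 2 (by omega)
        omega
  rcases le_or_gt a m with ham | ham
  · exact key a b ha hb ham hab
  rcases le_or_gt b m with hbm | hbm
  · exact (key b a hb ha hbm hab.symm).symm
  · obtain ⟨r, hr1, rfl⟩ : ∃ r, (1 ≤ r ∧ r < m) ∧ a = m + r :=
      ⟨a - m, ⟨by omega, by omega⟩, by omega⟩
    obtain ⟨s, hs1, rfl⟩ : ∃ s, (1 ≤ s ∧ s < m) ∧ b = m + s :=
      ⟨b - m, ⟨by omega, by omega⟩, by omega⟩
    rw [aux_pow_mod_high hn hr1.1 (by omega), aux_pow_mod_high hn hs1.1 (by omega)] at hab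
    have hur : 2 ^ r ≤ 2 ^ m := Nat.pow_le_pow_right (by norm_num) (by omega)
    have hus : 2 ^ s ≤ 2 ^ m := Nat.pow_le_pow_right (by norm_num) (by omega)
    have : 2 ^ r = 2 ^ s := by omega
    have := Nat.pow_right_injective (le_refl 2) this
    omega

lemma aux_disj (h3 : 3 ∣ n) :
    Disjoint ((range (n / 3)).image (fun j => 3 * j % n))
      ((range (2 * m)).image (fun j => 2 ^ j % n)) := by
  rw [Finset.disjoint_left]
  rintro x hxA hxB
  obtain ⟨j, hj, rfl⟩ := mem_image.mp hxA
  obtain ⟨i, hi, hEq⟩ := mem_image.mp hxB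
  have h3x : 3 ∣ 3 * j % n := (Nat.dvd_mod_iff h3).mpr ⟨j, rfl⟩
  rw [← hEq] at h3x
  have h2 : (3:ℕ) ∣ 2 ^ i := (Nat.dvd_mod_iff h3).mp h3x
  have := Nat.Prime.dvd_of_dvd_pow (by norm_num : Nat.Prime 3) h2
  omega

lemma aux_cardD (hm : 1 ≤ m) (hn : n = 2 ^ m + 1) (h3 : 3 ∣ n) :
    ((range (n / 3)).image (fun j => 3 * j % n) ∪
      (range (2 * m)).image (fun j => 2 ^ j % n)).card = n / 3 + 2 * m := by
  rw [Finset.card_union_of_disjoint (aux_disj h3), aux_cardA h3, aux_cardB hm hn]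

lemma aux_closed (hm : 1 ≤ m) (hn : n = 2 ^ m + 1) (h3 : 3 ∣ n) :
    ∀ a ∈ ((range (n / 3)).image (fun j => 3 * j % n) ∪
      (range (2 * m)).image (fun j => 2 ^ j % n)),
      2 * a % n ∈ ((range (n / 3)).image (fun j => 3 * j % n) ∪
      (range (2 * m)).image (fun j => 2 ^ j % n)) := by
  obtain ⟨h3n, h2m⟩ := aux_hn2 hm hn
  intro a ha
  rcases mem_union.mp ha with h | h
  · obtain ⟨j, hj, rfl⟩ := mem_image.mp h
    rw [mem_range] at hj
    refine mem_union_left _ (mem_image.mpr ⟨2 * j % (n / 3), mem_range.mpr (Nat.mod_lt _ (by omega)), ?_⟩)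
    have h1 : 3 * (2 * j % (n / 3)) = 3 * (2 * j) % n := by
      conv_rhs => rw [show n = 3 * (n / 3) by omega]
      rw [Nat.mul_mod_mul_left]
    rw [aux_A_val h3 (Nat.mod_lt _ (by omega) : 2 * j % (n / 3) < n / 3), h1,
      aux_A_val h3 hj, show 3 * (2 * j) = 2 * (3 * j) by ring]
  · obtain ⟨j, hj, rfl⟩ := mem_image.mp h
    rw [mem_range] at hj
    have hstep : 2 * (2 ^ j % n) % n = 2 ^ (j + 1) % n := by
      conv_rhs => rw [pow_succ, Nat.mul_mod, Nat.mod_eq_of_lt (show 2 < n by omega)]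
      rw [mul_comm]
    rcases eq_or_lt_of_le (show j + 1 ≤ 2 * m by omega) with he | hlt
    · refine mem_union_right _ (mem_image.mpr ⟨0, mem_range.mpr (by omega), ?_⟩)
      rw [hstep, he, aux_pow_mod_2m hn hm, pow_zero, Nat.mod_eq_of_lt (by omega)]
    · exact mem_union_right _ (mem_image.mpr ⟨j + 1, mem_range.mpr hlt, hstep.symm⟩)

lemma aux_Dsub (hn : n = 2 ^ m + 1) (a : ℕ)
    (ha : a ∈ ((range (n / 3)).image (fun j => 3 * j % n) ∪
      (range (2 * m)).image (fun j => 2 ^ j % n))) : a < n := by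
  rcases mem_union.mp ha with h | h <;>
    obtain ⟨j, _, rfl⟩ := mem_image.mp h <;>
    exact Nat.mod_lt _ (by have := Nat.one_le_two_pow (n := m); omega)

end D



-- divisibility from distinct roots
lemma aux_dvd {F : Type*} [Field F] (D : Finset ℕ) (β : ℕ → F) (hinj : Set.InjOn β D)
    {q : F[X]} (h : ∀ i ∈ D, q.eval (β i) = 0) : (∏ i ∈ D, (X - C (β i))) ∣ q := by
  rcases eq_or_ne q 0 with rfl | hq
  · exact dvd_zero _
  have hnd : (D.val.map β).Nodup :=
    Multiset.Nodup.map_on (fun x hx y hy => hinj (by exact hx) (by exact hy)) D.nodup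
  have hle : D.val.map β ≤ q.roots := by
    rw [Multiset.le_iff_subset hnd]
    intro r hr
    obtain ⟨i, hi, rfl⟩ := Multiset.mem_map.mp hr
    exact Polynomial.mem_roots'.mpr ⟨hq, h i hi⟩
  have hdvd := (Multiset.prod_X_sub_C_dvd_iff_le_roots hq (D.val.map β)).mpr hle
  have : (∏ i ∈ D, (X - C (β i))) = ((D.val.map β).map fun a => X - C a).prod := by
    rw [Multiset.map_map]; rfl
  rw [this]; exact hdvd

-- the product over D has coefficients in the prime field and lifts
lemma aux_lift {F : Type*} [Field F] [CharP F 2] {n : ℕ} {α : F} (hα1 : α ^ n = 1)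
    (hodd : n % 2 = 1) (hn0 : 0 < n) (D : Finset ℕ) (hsub : ∀ a ∈ D, a < n)
    (hclosed : ∀ a ∈ D, 2 * a % n ∈ D) :
    ∃ G : (ZMod 2)[X], G.map (ZMod.castHom (dvd_refl 2) F) = (∏ i ∈ D, (X - C (α ^ i))) ∧
      G.Monic ∧ G.natDegree = D.card := by
  haveI : Fact (Nat.Prime 2) := ⟨Nat.prime_two⟩
  set φ := ZMod.castHom (dvd_refl 2) F with hφ
  set g : F[X] := ∏ i ∈ D, (X - C (α ^ i)) with hg
  have hgmonic : g.Monic := monic_prod_of_monic _ _ fun i _ => monic_X_sub_C _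
  have hdblinj : Set.InjOn (fun a => 2 * a % n) D := by
    intro a ha b hb hab
    simp only at hab
    have h1 : (2 * a) % n = (2 * b) % n := hab
    have hco : Nat.gcd n 2 = 1 := by
      rcases (Nat.dvd_prime Nat.prime_two).mp (Nat.gcd_dvd_right n 2) with h | h
      · exact h
      · exfalso; have := Nat.gcd_dvd_left n 2; rw [h] at this; omega
    have := Nat.ModEq.cancel_left_of_coprime hco (show 2 * a ≡ 2 * b [MOD n] from h1)
    have ha' := hsub a ha; have hb' := hsub b hb
    unfold Nat.ModEq at this
    rw [Nat.mod_eq_of_lt ha', Nat.mod_eq_of_lt hb'] at this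
    exact this
  have himg : D.image (fun a => 2 * a % n) = D := by
    apply Finset.eq_of_subset_of_card_le
    · intro x hx; obtain ⟨i, hi, rfl⟩ := mem_image.mp hx; exact hclosed i hi
    · rw [Finset.card_image_of_injOn hdblinj]
  have hmap : g.map (frobenius F 2) = g := by
    rw [hg, Polynomial.map_prod]
    have hterm : ∀ i ∈ D, (X - C (α ^ i)).map (frobenius F 2) = X - C (α ^ (2 * i % n)) := by
      intro i hi
      rw [Polynomial.map_sub, map_X, map_C, frobenius_def]
      rw [aux_pow_exp_mod hα1 (2 * i), ← pow_mul, mul_comm i 2]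
    rw [Finset.prod_congr rfl hterm]
    conv_rhs => rw [← himg]
    rw [Finset.prod_image hdblinj]
  have hlift : g ∈ Polynomial.lifts φ := by
    rw [Polynomial.lifts_iff_coeff_lifts]
    intro k
    have hck := congrArg (fun p => Polynomial.coeff p k) hmap
    simp only [Polynomial.coeff_map, frobenius_def] at hck
    rcases mul_eq_zero.mp (show g.coeff k * (g.coeff k - 1) = 0 by linear_combination hck) with h | h
    · exact ⟨0, by rw [map_zero, h]⟩
    · exact ⟨1, by rw [map_one]; exact (sub_eq_zero.mp h).symm⟩
  obtain ⟨G, hGmap, hGdeg, hGmonic⟩ := Polynomial.lifts_and_degree_eq_and_monic hlift hgmonic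
  refine ⟨G, hGmap, hGmonic, ?_⟩
  have h1 : g.natDegree = D.card := by
    rw [hg, Polynomial.natDegree_prod _ _ (fun i _ => X_sub_C_ne_zero _)]
    simp only [natDegree_X_sub_C]
    simp
  rw [← h1]
  exact natDegree_eq_of_degree_eq hGdeg


/-- Construction 1 (binary reversible codes): for `n = 2^m + 1` with `m` odd and
`3 ∣ n`, the binary cyclic code with defining set
`{3j mod n : 0 ≤ j < n/3} ∪ C₁` (where `C₁` is the 2-cyclotomic coset of 1 mod `n`)
has dimension `(2/3)(2^m+1) − 2m` and minimum distance at least `10`. -/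
theorem stmt5 (m : ℕ) (hmodd : Odd m) (n : ℕ) (hn : n = 2 ^ m + 1) (h3 : 3 ∣ n)
    (F : Type*) [Field F] [CharP F 2] (α : F) (hα : IsPrimitiveRoot α n)
    (D : Finset ℕ)
    (hD : D = (Finset.range (n / 3)).image (fun j => (3 * j) % n) ∪
        (Finset.range (2 * m)).image (fun j => (2 ^ j) % n))
    (C : Submodule (ZMod 2) (Fin n → ZMod 2))
    (hC : (C : Set (Fin n → ZMod 2)) =
      {c | ∀ i ∈ D,
        ∑ j : Fin n, (ZMod.castHom (dvd_refl 2) F) (c j) * α ^ (i * (j : ℕ)) = 0}) :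
    Module.finrank (ZMod 2) C = 2 * (2 ^ m + 1) / 3 - 2 * m ∧
    ∀ c ∈ C, c ≠ 0 → 10 ≤ hammingNorm c := by
  classical
  have hm1 : 1 ≤ m := hmodd.pos
  obtain ⟨hn3, h2m⟩ := aux_hn2 hm1 hn
  have hn0 : 0 < n := by omega
  haveI : Fact (Nat.Prime 2) := ⟨Nat.prime_two⟩
  set φ : ZMod 2 →+* F := ZMod.castHom (dvd_refl 2) F with hφ
  have hφinj : Function.Injective φ := φ.injective
  have hα1 : α ^ n = 1 := hα.pow_eq_one
  have hαne : α ≠ 0 := hα.ne_zero (by omega)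
  -- D facts
  have hDsub : ∀ a ∈ D, a < n := fun a ha => aux_Dsub hn a (hD ▸ ha)
  have hDcard : D.card = n / 3 + 2 * m := by rw [hD]; exact aux_cardD hm1 hn h3
  have hDclosed : ∀ a ∈ D, 2 * a % n ∈ D := by rw [hD]; exact aux_closed hm1 hn h3
  have hdGn : D.card ≤ n := by
    calc D.card ≤ (range n).card := Finset.card_le_card (fun a ha => mem_range.mpr (hDsub a ha))
    _ = n := card_range n
  -- membership in C as a set property
  have hmemC : ∀ c : Fin n → ZMod 2, c ∈ C ↔ ∀ i ∈ D,
      ∑ j : Fin n, φ (c j) * α ^ (i * (j : ℕ)) = 0 := by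
    intro c
    rw [← SetLike.mem_coe, hC]
    rfl
  -- G
  obtain ⟨G, hGmap, hGmonic, hGnat⟩ :=
    aux_lift hα1 (by have := dvd_pow_self 2 (show m ≠ 0 by omega); omega) hn0 D hDsub hDclosed
  have hG0 : G ≠ 0 := hGmonic.ne_zero
  -- evaluation lemma
  have hsum : ∀ (c : Fin n → ZMod 2) (p : (ZMod 2)[X]), p ∈ degreeLT (ZMod 2) n →
      (∀ j : Fin n, p.coeff (j : ℕ) = c j) → ∀ i : ℕ,
      ∑ j : Fin n, φ (c j) * α ^ (i * (j : ℕ)) = (p.map φ).eval (α ^ i) := by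
    intro c p hp hcoeff i
    have hnat : p.natDegree < n := by
      rcases eq_or_ne p 0 with rfl | h0
      · simpa using hn0
      · exact (natDegree_lt_iff_degree_lt h0).mpr (mem_degreeLT.mp hp)
    rw [Polynomial.eval_map, Polynomial.eval₂_eq_sum_range' φ hnat,
      ← Fin.sum_univ_eq_sum_range (fun j => φ (p.coeff j) * (α ^ i) ^ j) n]
    refine Finset.sum_congr rfl fun j _ => ?_
    rw [hcoeff j, ← pow_mul]
  -- degree bound
  have hdeglt : ∀ q : (ZMod 2)[X], q ∈ degreeLT (ZMod 2) (n - D.card) →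
      (G * q) ∈ degreeLT (ZMod 2) n := by
    intro q hq
    rw [mem_degreeLT]
    rcases eq_or_ne q 0 with rfl | h0
    · rw [mul_zero, degree_zero]; exact WithBot.bot_lt_coe n
    · have h1 : q.natDegree < n - D.card := by
        rcases Nat.eq_zero_or_pos (n - D.card) with h | h
        · exfalso
          rw [mem_degreeLT, h] at hq
          rw [Nat.cast_zero, Nat.WithBot.lt_zero_iff, degree_eq_bot] at hq
          exact h0 hq
        · exact (natDegree_lt_iff_degree_lt h0).mpr (mem_degreeLT.mp hq)
      have h2 : (G * q).natDegree < n := by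
        rw [natDegree_mul hG0 h0, hGnat]; omega
      exact (natDegree_lt_iff_degree_lt (mul_ne_zero hG0 h0)).mp h2
  -- membership characterization
  have hmem : ∀ c : Fin n → ZMod 2, c ∈ C ↔ ∃ q : (ZMod 2)[X],
      q ∈ degreeLT (ZMod 2) (n - D.card) ∧ ∀ j : Fin n, (G * q).coeff (j : ℕ) = c j := by
    intro c
    rw [hmemC]
    constructor
    · intro hc
      set P := (degreeLTEquiv (ZMod 2) n).symm c with hP
      have hPmem : (P : (ZMod 2)[X]) ∈ degreeLT (ZMod 2) n := P.2
      have hPcoeff : ∀ j : Fin n, (P : (ZMod 2)[X]).coeff (j : ℕ) = c j := by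
        intro j
        exact congrFun ((degreeLTEquiv (ZMod 2) n).apply_symm_apply c) j
      have hroots : ∀ i ∈ D, ((P : (ZMod 2)[X]).map φ).eval (α ^ i) = 0 := by
        intro i hi
        rw [← hsum c _ hPmem hPcoeff i]
        exact hc i hi
      have hinj : Set.InjOn (fun i : ℕ => α ^ i) D := fun a ha b hb hab =>
        hα.pow_inj (hDsub a ha) (hDsub b hb) hab
      have hgdvd : (∏ i ∈ D, (X - Polynomial.C (α ^ i))) ∣ (P : (ZMod 2)[X]).map φ :=
        aux_dvd D _ hinj hroots
      rw [← hGmap] at hgdvd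
      obtain ⟨q, hq⟩ := (Polynomial.map_dvd_map φ hφinj hGmonic).mp hgdvd
      refine ⟨q, ?_, ?_⟩
      · rw [mem_degreeLT]
        rcases eq_or_ne q 0 with rfl | h0
        · rw [degree_zero]; exact WithBot.bot_lt_coe _
        · have hP0 : (P : (ZMod 2)[X]) ≠ 0 := by
            rw [hq]; exact mul_ne_zero hG0 h0
          have h1 : (P : (ZMod 2)[X]).natDegree < n :=
            (natDegree_lt_iff_degree_lt hP0).mpr (mem_degreeLT.mp hPmem)
          rw [hq, natDegree_mul hG0 h0, hGnat] at h1
          exact (natDegree_lt_iff_degree_lt h0).mp (show q.natDegree < n - D.card by omega)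
      · intro j
        rw [← hq]
        exact hPcoeff j
    · rintro ⟨q, hq, hcoeff⟩
      intro i hi
      rw [hsum c (G * q) (hdeglt q hq) hcoeff i]
      rw [Polynomial.map_mul, hGmap, eval_mul]
      have hz : eval (α ^ i) (∏ i ∈ D, (X - Polynomial.C (α ^ i))) = 0 := by
        rw [eval_prod]
        exact Finset.prod_eq_zero hi (by simp)
      rw [hz, zero_mul]
  -- the parametrization map
  set T : degreeLT (ZMod 2) (n - D.card) →ₗ[ZMod 2] (Fin n → ZMod 2) :=
    LinearMap.pi (fun j : Fin n => (lcoeff (ZMod 2) (j : ℕ)).comp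
      ((LinearMap.mulLeft (ZMod 2) G).comp (Submodule.subtype _))) with hT
  have hTapply : ∀ (q : degreeLT (ZMod 2) (n - D.card)) (j : Fin n),
      T q j = (G * (q : (ZMod 2)[X])).coeff (j : ℕ) := fun q j => rfl
  have hrange : LinearMap.range T = C := by
    ext c
    rw [LinearMap.mem_range]
    constructor
    · rintro ⟨⟨q, hq⟩, rfl⟩
      exact (hmem _).mpr ⟨q, hq, fun j => rfl⟩
    · intro hc
      obtain ⟨q, hq, hco⟩ := (hmem c).mp hc
      exact ⟨⟨q, hq⟩, funext hco⟩
  have hTinj : Function.Injective T := by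
    intro q₁ q₂ hq
    have hco : ∀ j : Fin n, (G * (q₁ : (ZMod 2)[X])).coeff (j : ℕ) =
        (G * (q₂ : (ZMod 2)[X])).coeff (j : ℕ) := fun j => by
      rw [← hTapply q₁ j, ← hTapply q₂ j, hq]
    have hGq : G * (q₁ : (ZMod 2)[X]) = G * (q₂ : (ZMod 2)[X]) := by
      ext k
      rcases lt_or_ge k n with hk | hk
      · exact hco ⟨k, hk⟩
      · rw [Polynomial.coeff_eq_zero_of_degree_lt, Polynomial.coeff_eq_zero_of_degree_lt]
        · exact lt_of_lt_of_le (mem_degreeLT.mp (hdeglt _ q₂.2)) (by exact_mod_cast hk)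
        · exact lt_of_lt_of_le (mem_degreeLT.mp (hdeglt _ q₁.2)) (by exact_mod_cast hk)
    have := mul_left_cancel₀ hG0 hGq
    exact Subtype.ext this
  have hfinrank : Module.finrank (ZMod 2) C = n - D.card := by
    rw [← hrange, LinearMap.finrank_range_of_inj hTinj,
      (degreeLTEquiv (ZMod 2) (n - D.card)).finrank_eq, Module.finrank_fin_fun]
  constructor
  · rw [hfinrank, hDcard]
    omega
  · intro c hcC hc0
    by_contra hlt
    push_neg at hlt
    have hzero : n - D.card = 0 → False := by
      intro h0
      obtain ⟨q, hq, hco⟩ := (hmem c).mp hcC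
      rw [h0] at hq
      have hq0 : q = 0 := by
        rw [mem_degreeLT, Nat.cast_zero, Nat.WithBot.lt_zero_iff, degree_eq_bot] at hq
        exact hq
      apply hc0
      funext j
      rw [← hco j, hq0, mul_zero, coeff_zero]
      rfl
    rcases (show m = 1 ∨ m = 3 ∨ 5 ≤ m by obtain ⟨k, hk⟩ := hmodd; omega) with hm | hm | hm
    · apply hzero; subst hm; norm_num at hn; omega
    · apply hzero; subst hm; norm_num at hn; omega
    · have hn33 : 33 ≤ n := by
        have h32 : (32:ℕ) ≤ 2 ^ m := by
          calc (32:ℕ) = 2 ^ 5 := by norm_num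
          _ ≤ 2 ^ m := Nat.pow_le_pow_right (by norm_num) hm
        omega
      have hDmem : ∀ k : ℕ, k ≤ 8 → (n - 4 + k) % n ∈ D := by
        intro k hk
        rw [hD]
        interval_cases k
        · refine mem_union_right _ (mem_image.mpr ⟨m + 2, mem_range.mpr (by omega), ?_⟩)
          show 2 ^ (m + 2) % n = (n - 4 + 0) % n
          rw [aux_pow_mod_high hn (by norm_num) (by omega), Nat.mod_eq_of_lt (by omega)]
          have h4 : (2:ℕ) ^ 2 = 4 := by norm_num
          omega
        · refine mem_union_left _ (mem_image.mpr ⟨n / 3 - 1, mem_range.mpr (by omega), ?_⟩)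
          show 3 * (n / 3 - 1) % n = (n - 4 + 1) % n
          rw [Nat.mod_eq_of_lt (by omega), Nat.mod_eq_of_lt (by omega)]
          omega
        · refine mem_union_right _ (mem_image.mpr ⟨m + 1, mem_range.mpr (by omega), ?_⟩)
          show 2 ^ (m + 1) % n = (n - 4 + 2) % n
          rw [aux_pow_mod_high hn (by norm_num) (by omega), Nat.mod_eq_of_lt (by omega)]
          have h2 : (2:ℕ) ^ 1 = 2 := by norm_num
          omega
        · refine mem_union_right _ (mem_image.mpr ⟨m, mem_range.mpr (by omega), ?_⟩)
          show 2 ^ m % n = (n - 4 + 3) % n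
          rw [Nat.mod_eq_of_lt (show 2 ^ m < n by omega), Nat.mod_eq_of_lt (by omega)]
          omega
        · refine mem_union_left _ (mem_image.mpr ⟨0, mem_range.mpr (by omega), ?_⟩)
          show 3 * 0 % n = (n - 4 + 4) % n
          rw [show n - 4 + 4 = n by omega, Nat.mod_self]
          simp
        · refine mem_union_right _ (mem_image.mpr ⟨0, mem_range.mpr (by omega), ?_⟩)
          show 2 ^ 0 % n = (n - 4 + 5) % n
          rw [show n - 4 + 5 = n + 1 by omega, Nat.add_mod_left]
          norm_num
        · refine mem_union_right _ (mem_image.mpr ⟨1, mem_range.mpr (by omega), ?_⟩)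
          show 2 ^ 1 % n = (n - 4 + 6) % n
          rw [show n - 4 + 6 = n + 2 by omega, Nat.add_mod_left]
          norm_num
        · refine mem_union_left _ (mem_image.mpr ⟨1, mem_range.mpr (by omega), ?_⟩)
          show 3 * 1 % n = (n - 4 + 7) % n
          rw [show n - 4 + 7 = n + 3 by omega, Nat.add_mod_left]
          try norm_num
        · refine mem_union_right _ (mem_image.mpr ⟨2, mem_range.mpr (by omega), ?_⟩)
          show 2 ^ 2 % n = (n - 4 + 8) % n
          rw [show n - 4 + 8 = n + 4 by omega, Nat.add_mod_left]
          norm_num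
      set S : Finset (Fin n) := Finset.univ.filter (fun j => c j ≠ 0) with hSdef
      have hSnorm : hammingNorm c = S.card := rfl
      have hs9 : S.card ≤ 9 := by rw [← hSnorm]; omega
      have hs1 : 0 < S.card := by
        rcases Function.ne_iff.mp hc0 with ⟨j, hj⟩
        refine Finset.card_pos.mpr ⟨j, ?_⟩
        simp only [hSdef, Finset.mem_filter, Finset.mem_univ, true_and]
        exact fun h => hj (by rw [h]; rfl)
      let E : Fin S.card → {x // x ∈ S} := (S.equivFin).symm
      have hEinj : Function.Injective E := (S.equivFin).symm.injective
      let idx : Fin S.card → ℕ := fun t => ((E t : Fin n) : ℕ)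
      have hidxn : ∀ t, idx t < n := fun t => (E t : Fin n).isLt
      have hidxinj : Function.Injective idx := by
        intro a b hab
        exact hEinj (Subtype.ext (Fin.ext hab))
      have hcmem : ∀ t, c (E t : Fin n) ≠ 0 := fun t => (Finset.mem_filter.mp (E t).2).2
      let w : Fin S.card → F := fun t => α ^ idx t
      have hwinj : Function.Injective w := by
        intro a b hab
        exact hidxinj (hα.pow_inj (hidxn a) (hidxn b) hab)
      let v : Fin S.card → F := fun t => φ (c (E t : Fin n)) * α ^ ((n - 4) * idx t)
      have hCeq : ∀ i ∈ D, ∑ j : Fin n, φ (c j) * α ^ (i * (j : ℕ)) = 0 := (hmemC c).mp hcC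
      have key : ∀ k : Fin S.card, ∑ t, v t * w t ^ (k : ℕ) = 0 := by
        intro k
        have hkD : (n - 4 + (k : ℕ)) % n ∈ D := hDmem k (by have := k.isLt; omega)
        have h0 := hCeq _ hkD
        calc ∑ t, v t * w t ^ (k : ℕ)
            = ∑ t, φ (c (E t : Fin n)) * α ^ ((n - 4 + (k : ℕ)) * idx t) := by
              refine Finset.sum_congr rfl fun t _ => ?_
              show φ _ * α ^ ((n - 4) * idx t) * (α ^ idx t) ^ (k : ℕ) = _
              rw [mul_assoc, ← pow_mul, ← pow_add]
              congr 2
              ring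
          _ = ∑ j ∈ S, φ (c j) * α ^ ((n - 4 + (k : ℕ)) * (j : ℕ)) := by
              rw [← Finset.sum_coe_sort S (fun j => φ (c j) * α ^ ((n - 4 + (k : ℕ)) * (j : ℕ)))]
              exact Fintype.sum_equiv (S.equivFin).symm _ _ (fun t => rfl)
          _ = ∑ j : Fin n, φ (c j) * α ^ ((n - 4 + (k : ℕ)) * (j : ℕ)) := by
              refine Finset.sum_subset (Finset.subset_univ S) ?_
              intro j _ hj
              have hcj : c j = 0 := by simpa [hSdef] using hj
              rw [hcj, map_zero, zero_mul]
          _ = 0 := by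
              rw [← h0]
              refine Finset.sum_congr rfl fun j _ => ?_
              congr 1
              rw [pow_mul, pow_mul, aux_pow_exp_mod hα1]
      have hv0 : v = 0 := by
        apply Matrix.eq_zero_of_mulVec_eq_zero
          (show ((Matrix.vandermonde w).transpose).det ≠ 0 from by
            rw [Matrix.det_transpose]
            exact Matrix.det_vandermonde_ne_zero_iff.mpr hwinj)
        funext k
        have hmv : ((Matrix.vandermonde w).transpose.mulVec v) k
            = ∑ t, w t ^ (k : ℕ) * v t := by
          simp only [Matrix.mulVec, dotProduct, Matrix.transpose_apply,
            Matrix.vandermonde, Matrix.of_apply]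
        rw [hmv, show ∑ t, w t ^ (k : ℕ) * v t = ∑ t, v t * w t ^ (k : ℕ) from
          Finset.sum_congr rfl fun t _ => mul_comm _ _, key k]
        rfl
      have ht0 : φ (c (E ⟨0, hs1⟩ : Fin n)) * α ^ ((n - 4) * idx ⟨0, hs1⟩) = 0 := by
        have h := congrFun hv0 ⟨0, hs1⟩
        rw [Pi.zero_apply] at h
        exact h
      rcases mul_eq_zero.mp ht0 with h | h
      · exact hcmem _ (hφinj (h.trans (map_zero φ).symm))
      · exact pow_ne_zero _ hαne h
end

section
/- Let n = 2^m + 1 with m odd and 3 ∣ n. Any binary linear code of length n with minimum distance d ≥ 10 and 2-locality given by disjoint single-parity checks on blocks of length 3 (i.e., whose block-projection yields an additive code over F_4 of length n/3 with minimum distance ≥ 5) has dimension k ≤ (2/3)(2^m+1) − 2m. -/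
open Finset

private abbrev W (N : ℕ) := Fin N → Fin 3 → ZMod 2

private def Spar (N : ℕ) : Finset (W N) :=
  Finset.univ.filter (fun x : W N => ∀ i, ∑ j, x i j = 0)

private def B0 (N : ℕ) : Finset (W N) :=
  (Spar N).filter fun x => hammingNorm x ≤ 2

private def F3 : Finset (Fin 3 → ZMod 2) :=
  Finset.univ.filter (fun v => (∑ j, v j = 0) ∧ v ≠ 0)

private lemma card_F3 : F3.card = 3 := by decide

private lemma two_single_apply {N : ℕ} (i i' t : Fin N) (hne : i ≠ i')
    (a b : Fin 3 → ZMod 2) :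
    (Pi.single i a + Pi.single i' b : W N) t = if t = i then a else if t = i' then b else 0 := by
  simp only [Pi.add_apply, Pi.single_apply]
  split_ifs <;> simp_all

private lemma norm_single {N : ℕ} (i : Fin N) (a : Fin 3 → ZMod 2) (ha : a ≠ 0) :
    hammingNorm (Pi.single i a : W N) = 1 := by
  have h : (Finset.univ.filter fun t => (Pi.single i a : W N) t ≠ 0) = {i} := by
    ext t
    by_cases h : t = i <;> simp [Pi.single_apply, h, ha]
  simp only [hammingNorm, h, Finset.card_singleton]

private lemma norm_two_single {N : ℕ} (i i' : Fin N) (hne : i ≠ i')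
    (a b : Fin 3 → ZMod 2) (ha : a ≠ 0) (hb : b ≠ 0) :
    hammingNorm (Pi.single i a + Pi.single i' b : W N) = 2 := by
  have h : (Finset.univ.filter fun t => (Pi.single i a + Pi.single i' b : W N) t ≠ 0)
      = {i, i'} := by
    ext t
    rw [Finset.mem_filter, two_single_apply i i' t hne a b]
    by_cases h1 : t = i <;> by_cases h2 : t = i' <;> simp_all
  simp only [hammingNorm, h]
  rw [Finset.card_insert_of_notMem (by simp [hne]), Finset.card_singleton]


private lemma two_single_inj {N : ℕ} {i i' j j' : Fin N} {a b c d : Fin 3 → ZMod 2}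
    (hii : i < i') (hjj : j < j') (ha : a ≠ 0) (hb : b ≠ 0) (hc : c ≠ 0) (hd : d ≠ 0)
    (h : Pi.single i a + Pi.single i' b = (Pi.single j c + Pi.single j' d : W N)) :
    i = j ∧ i' = j' ∧ a = c ∧ b = d := by
  have E : ∀ t, (if t = i then a else if t = i' then b else 0)
      = (if t = j then c else if t = j' then d else 0) := by
    intro t
    rw [← two_single_apply i i' t (ne_of_lt hii), ← two_single_apply j j' t (ne_of_lt hjj), h]
  have hji : j = i ∨ j = i' := by
    by_contra hcon
    push_neg at hcon
    have e := E j
    rw [if_neg hcon.1, if_neg hcon.2, if_pos rfl] at e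
    exact hc e.symm
  have hij : i = j ∨ i = j' := by
    by_contra hcon
    push_neg at hcon
    have e := E i
    rw [if_pos rfl, if_neg hcon.1, if_neg hcon.2] at e
    exact ha e
  have hj' : j' = i ∨ j' = i' := by
    by_contra hcon
    push_neg at hcon
    have e := E j'
    rw [if_neg hcon.1, if_neg hcon.2, if_neg (ne_of_gt hjj), if_pos rfl] at e
    exact hd e.symm
  have h1 : i = j := by
    rcases hji with h1 | h1
    · exact h1.symm
    · rcases hij with h2 | h2
      · exact h2
      · exfalso
        rw [← h1] at hii
        rw [← h2] at hjj
        exact lt_asymm hii hjj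
  have h2 : i' = j' := by
    rcases hj' with h2 | h2
    · exfalso
      rw [h2, h1] at hjj
      exact lt_irrefl _ hjj
    · exact h2.symm
  refine ⟨h1, h2, ?_, ?_⟩
  · have e := E i
    rw [if_pos rfl, if_pos h1] at e
    exact e
  · have e := E i'
    rw [if_neg (ne_of_gt hii), if_pos rfl, if_neg (by rw [h1] at hii; exact ne_of_gt hii),
      if_pos h2] at e
    exact e

private lemma packingB (N : ℕ) : 2 + 6 * N + 9 * (N * (N - 1)) ≤ 2 * (B0 N).card := by
  classical
  set PS : Finset (Fin N × Fin N) := Finset.univ.filter (fun p => p.1 < p.2) with hPSdef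
  -- 2 * PS.card = N * N - N
  have hPS : 2 * PS.card = N * N - N := by
    set PS' : Finset (Fin N × Fin N) := Finset.univ.filter (fun p => p.2 < p.1) with hPS'def
    have hcardeq : PS.card = PS'.card := by
      refine Finset.card_nbij' Prod.swap Prod.swap ?_ ?_ ?_ ?_ <;>
        intro p hp <;> simp_all [Prod.swap]
    have hunion : (Finset.univ : Finset (Fin N)).offDiag = PS ∪ PS' := by
      ext p
      simp only [Finset.mem_offDiag, Finset.mem_union, hPSdef, hPS'def, Finset.mem_filter,
        Finset.mem_univ, true_and]
      exact ne_iff_lt_or_gt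
    have hdisj : Disjoint PS PS' := by
      rw [Finset.disjoint_left]
      intro p hp hp'
      simp only [hPSdef, hPS'def, Finset.mem_filter] at hp hp'
      exact absurd hp'.2 (not_lt_of_gt hp.2)
    have hoff : (Finset.univ : Finset (Fin N)).offDiag.card = N * N - N := by
      rw [Finset.offDiag_card]
      simp
    rw [hunion, Finset.card_union_of_disjoint hdisj, ← hcardeq] at hoff
    omega
  -- the three pieces
  set S0 : Finset (W N) := {0} with hS0def
  set S1 : Finset (W N) :=
    (Finset.univ ×ˢ F3).image (fun p : Fin N × (Fin 3 → ZMod 2) => Pi.single p.1 p.2) with hS1def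
  set S2 : Finset (W N) :=
    (PS ×ˢ (F3 ×ˢ F3)).image
      (fun q : (Fin N × Fin N) × ((Fin 3 → ZMod 2) × (Fin 3 → ZMod 2)) =>
        Pi.single q.1.1 q.2.1 + Pi.single q.1.2 q.2.2) with hS2def
  -- norms on pieces
  have hn0 : ∀ x ∈ S0, hammingNorm x = 0 := by
    intro x hx; simp [hS0def] at hx; simp [hx]
  have hn1 : ∀ x ∈ S1, hammingNorm x = 1 := by
    intro x hx
    simp only [hS1def, Finset.mem_image, Finset.mem_product, Finset.mem_univ, true_and] at hx
    obtain ⟨p, hp, rfl⟩ := hx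
    simp only [F3, Finset.mem_filter] at hp
    exact norm_single _ _ hp.2.2
  have hn2 : ∀ x ∈ S2, hammingNorm x = 2 := by
    intro x hx
    simp only [hS2def, Finset.mem_image, Finset.mem_product] at hx
    obtain ⟨q, ⟨hq1, hq2, hq3⟩, rfl⟩ := hx
    simp only [hPSdef, Finset.mem_filter] at hq1
    simp only [F3, Finset.mem_filter] at hq2 hq3
    exact norm_two_single _ _ (ne_of_lt hq1.2) _ _ hq2.2.2 hq3.2.2
  -- pieces are in B0
  have hsub : S0 ∪ S1 ∪ S2 ⊆ B0 N := by
    intro x hx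
    simp only [Finset.mem_union] at hx
    simp only [B0, Spar, Finset.mem_filter, Finset.mem_univ, true_and]
    rcases hx with (hx | hx) | hx
    · simp [hS0def] at hx
      subst hx
      refine ⟨fun i => by simp, by simp⟩
    · refine ⟨?_, by rw [hn1 x hx]; omega⟩
      simp only [hS1def, Finset.mem_image, Finset.mem_product, Finset.mem_univ, true_and] at hx
      obtain ⟨p, hp, rfl⟩ := hx
      simp only [F3, Finset.mem_filter] at hp
      intro t
      rw [show (Pi.single p.1 p.2 : W N) t = if t = p.1 then p.2 else 0 from Pi.single_apply _ _ _]
      split_ifs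
      · exact hp.2.1
      · simp
    · refine ⟨?_, by rw [hn2 x hx]⟩
      simp only [hS2def, Finset.mem_image, Finset.mem_product] at hx
      obtain ⟨q, ⟨hq1, hq2, hq3⟩, rfl⟩ := hx
      simp only [hPSdef, Finset.mem_filter] at hq1
      simp only [F3, Finset.mem_filter] at hq2 hq3
      intro t
      rw [two_single_apply _ _ t (ne_of_lt hq1.2) _ _]
      split_ifs
      · exact hq2.2.1
      · exact hq3.2.1
      · simp
  -- disjointness of pieces
  have hd01 : Disjoint S0 S1 := by
    rw [Finset.disjoint_left]; intro x h0 h1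
    have := hn0 x h0; have := hn1 x h1; omega
  have hd2 : Disjoint (S0 ∪ S1) S2 := by
    rw [Finset.disjoint_left]; intro x h01 h2
    have h2' := hn2 x h2
    rcases Finset.mem_union.mp h01 with h | h
    · have := hn0 x h; omega
    · have := hn1 x h; omega
  -- cardinalities
  have hc1 : S1.card = N * 3 := by
    rw [hS1def, Finset.card_image_of_injOn, Finset.card_product, Finset.card_univ,
      Fintype.card_fin, card_F3]
    intro p hp q hq h
    dsimp only at h
    simp only [Finset.mem_coe, Finset.mem_product, Finset.mem_univ, true_and] at hp hq
    simp only [F3, Finset.mem_filter] at hp hq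
    by_cases hpq : p.1 = q.1
    · have := congrFun h p.1
      rw [Pi.single_eq_same, hpq, Pi.single_eq_same] at this
      exact Prod.ext hpq this
    · have := congrFun h q.1
      rw [Pi.single_eq_same, Pi.single_apply] at this
      rw [if_neg (fun hh => hpq hh.symm)] at this
      exact absurd this.symm hq.2.2
  have hc2 : S2.card = PS.card * 9 := by
    rw [hS2def, Finset.card_image_of_injOn, Finset.card_product, Finset.card_product, card_F3]
    intro p hp q hq h
    dsimp only at h
    simp only [Finset.mem_coe, Finset.mem_product] at hp hq
    obtain ⟨hp1, hp2, hp3⟩ := hp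
    obtain ⟨hq1, hq2, hq3⟩ := hq
    simp only [hPSdef, Finset.mem_filter] at hp1 hq1
    simp only [F3, Finset.mem_filter] at hp2 hp3 hq2 hq3
    obtain ⟨e1, e2, e3, e4⟩ := two_single_inj hp1.2 hq1.2 hp2.2.2 hp3.2.2 hq2.2.2 hq3.2.2 h
    exact Prod.ext (Prod.ext e1 e2) (Prod.ext e3 e4)
  -- put it together
  have hcard : (S0 ∪ S1 ∪ S2).card = 1 + N * 3 + PS.card * 9 := by
    rw [Finset.card_union_of_disjoint hd2, Finset.card_union_of_disjoint hd01, hc1, hc2]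
    simp [hS0def]
  have hle : (S0 ∪ S1 ∪ S2).card ≤ (B0 N).card := Finset.card_le_card hsub
  have hmul : N * (N - 1) = N * N - N := Nat.mul_pred _ _
  omega

private lemma card_Spar (N : ℕ) : (Spar N).card = 4 ^ N := by
  classical
  have h4 : (Finset.univ.filter (fun v : Fin 3 → ZMod 2 => ∑ j, v j = 0)).card = 4 := by decide
  have : Spar N = Fintype.piFinset
      (fun _ : Fin N => Finset.univ.filter (fun v : Fin 3 → ZMod 2 => ∑ j, v j = 0)) := by
    ext x
    simp [Spar, Fintype.mem_piFinset]
  rw [this, Fintype.card_piFinset]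
  simp [h4]

private lemma packingA (N : ℕ) (C : Submodule (ZMod 2) (W N)) [Fintype ↥C]
    (hparity : ∀ c ∈ C, ∀ i, ∑ j, c i j = 0)
    (hproj : ∀ c ∈ C, c ≠ 0 → 5 ≤ hammingNorm c) :
    Fintype.card ↥C * (B0 N).card ≤ 4 ^ N := by
  classical
  set B : W N → Finset (W N) := fun c => (Spar N).filter fun x => hammingDist x c ≤ 2 with hB
  -- each ball has the same card as B0
  have hcard : ∀ c ∈ C, (B c).card = (B0 N).card := by
    intro c hc
    refine Finset.card_nbij' (fun x => x - c) (fun y => y + c) ?_ ?_ ?_ ?_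
    · intro x hx
      simp only [hB, B0, Spar, Finset.mem_coe, mem_filter, mem_univ, true_and] at hx ⊢
      constructor
      · intro i
        simp only [Pi.sub_apply, Finset.sum_sub_distrib, hx.1 i, hparity c hc i, sub_zero]
      · rw [show x - c = -c + x by abel, ← hammingDist_eq_hammingNorm, hammingDist_comm]
        exact hx.2
    · intro y hy
      simp only [hB, B0, Spar, Finset.mem_coe, mem_filter, mem_univ, true_and] at hy ⊢
      constructor
      · intro i
        simp only [Pi.add_apply, Finset.sum_add_distrib, hy.1 i, hparity c hc i, add_zero]
      · rw [hammingDist_comm, hammingDist_eq_hammingNorm, show -c + (y + c) = y by abel, ← hammingDist_zero_right]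
        exact hy.2
    · intro x _; exact sub_add_cancel x c
    · intro y _; exact add_sub_cancel_right y c
  -- balls are disjoint
  have hdisj : ∀ c ∈ C, ∀ c' ∈ C, c ≠ c' → Disjoint (B c) (B c') := by
    intro c hc c' hc' hne
    rw [Finset.disjoint_left]
    intro x hx hx'
    simp only [hB, mem_filter] at hx hx'
    have h5 : 5 ≤ hammingNorm (c - c') := by
      refine hproj _ (sub_mem hc hc') (by simpa [sub_eq_zero] using hne)
    have h1 : hammingDist c c' ≤ hammingDist c x + hammingDist x c' :=
      hammingDist_triangle c x c'
    have h2 : hammingDist c x ≤ 2 := by rw [hammingDist_comm]; exact hx.2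
    have h3 : hammingDist x c' ≤ 2 := hx'.2
    rw [hammingDist_comm c c', hammingDist_eq_hammingNorm, show -c' + c = c - c' by abel] at h1
    omega
  -- sum of ball sizes bounded by card Spar
  have key : (Finset.univ : Finset ↥C).biUnion (fun c => B c.val) ⊆ Spar N := by
    intro x hx
    simp only [mem_biUnion] at hx
    obtain ⟨c, _, hxc⟩ := hx
    exact (mem_filter.mp hxc).1
  have hcardbi := Finset.card_biUnion (s := (Finset.univ : Finset ↥C))
    (t := fun c => B c.val) (fun c _ c' _ h => hdisj c.val c.2 c'.val c'.2 (by
      exact fun hh => h (Subtype.ext hh)))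
  have hsum : ∑ c : ↥C, (B c.val).card = Fintype.card ↥C * (B0 N).card := by
    rw [Finset.sum_congr rfl (fun c _ => hcard c.val c.2), Finset.sum_const,
      smul_eq_mul, Finset.card_univ]
  calc Fintype.card ↥C * (B0 N).card = ∑ c : ↥C, (B c.val).card := hsum.symm
    _ = ((Finset.univ : Finset ↥C).biUnion (fun c => B c.val)).card := hcardbi.symm
    _ ≤ (Spar N).card := Finset.card_le_card key
    _ = 4 ^ N := card_Spar N

/-- Optimality (Theorem 3): for `n = 2^m + 1` with `m` odd and `3 ∣ n`, any binary
linear code of length `n` with minimum distance at least `10` whose coordinates are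
partitioned into `n/3` single-parity-check blocks of length `3`, and whose
block-projection (an additive code over `F₄` of length `n/3`) has minimum distance
at least `5`, has dimension at most `(2/3)(2^m+1) − 2m`. -/
theorem stmt6 (m : ℕ) (hmodd : Odd m) (n : ℕ) (hn : n = 2 ^ m + 1) (h3 : 3 ∣ n)
    (k : ℕ)
    (C : Submodule (ZMod 2) (Fin (n / 3) → Fin 3 → ZMod 2))
    (hk : Module.finrank (ZMod 2) C = k)
    (hparity : ∀ c ∈ C, ∀ i, ∑ j, c i j = 0)
    (hdist : ∀ c ∈ C, c ≠ 0 → 10 ≤ ∑ i, hammingNorm (c i))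
    (hproj : ∀ c ∈ C, c ≠ 0 → 5 ≤ hammingNorm c) :
    k ≤ 2 * (2 ^ m + 1) / 3 - 2 * m := by
  classical
  haveI : Fintype ↥C := Fintype.ofFinite ↥C
  have hA := packingA (n / 3) C hparity hproj
  have hB := packingB (n / 3)
  have hcardC : Fintype.card ↥C = 2 ^ k := by
    rw [Module.card_eq_pow_finrank (K := ZMod 2) (V := ↥C), ZMod.card, hk]
  have hcomb : 2 ^ k * (2 + 6 * (n / 3) + 9 * ((n / 3) * ((n / 3) - 1))) ≤ 2 * 4 ^ (n / 3) := by
    calc 2 ^ k * (2 + 6 * (n / 3) + 9 * ((n / 3) * ((n / 3) - 1)))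
        ≤ 2 ^ k * (2 * (B0 (n / 3)).card) := Nat.mul_le_mul_left _ hB
      _ = 2 * (2 ^ k * (B0 (n / 3)).card) := by ring
      _ ≤ 2 * 4 ^ (n / 3) := Nat.mul_le_mul_left _ (by rw [← hcardC]; exact hA)
  have hm1 : 1 ≤ 2 ^ m := Nat.one_le_two_pow
  have h3N : 3 * (n / 3) = 2 ^ m + 1 := by
    obtain ⟨t, ht⟩ := h3
    omega
  obtain ⟨p, hp⟩ : ∃ p, (n / 3) = p + 1 := ⟨(n / 3) - 1, by omega⟩
  have hident : 2 + 6 * (n / 3) + 9 * ((n / 3) * ((n / 3) - 1)) = 2 ^ (2 * m) + 2 ^ m + 2 := by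
    have hq : 2 ^ m = 3 * p + 2 := by omega
    rw [two_mul, pow_add, hq, hp]
    simp only [Nat.add_sub_cancel]
    ring
  rw [hident] at hcomb
  have hpow : 2 ^ (k + 2 * m) < 2 ^ (2 * (n / 3) + 1) := by
    calc 2 ^ (k + 2 * m) = 2 ^ k * 2 ^ (2 * m) := pow_add 2 k (2 * m)
      _ < 2 ^ k * (2 ^ (2 * m) + 2 ^ m + 2) := by
          have hk0 : 0 < 2 ^ k := by positivity
          have : 2 ^ (2 * m) < 2 ^ (2 * m) + 2 ^ m + 2 := by omega
          exact mul_lt_mul_of_pos_left this hk0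
      _ ≤ 2 * 4 ^ (n / 3) := hcomb
      _ = 2 ^ (2 * (n / 3) + 1) := by
          rw [show (4 : ℕ) = 2 ^ 2 from rfl, ← pow_mul, pow_succ, mul_comm 2 (n / 3), mul_comm]
  have hlt : k + 2 * m < 2 * (n / 3) + 1 := by
    have h12 : (1 : ℕ) < 2 := one_lt_two
    exact (Nat.pow_lt_pow_iff_right h12).mp hpow
  omega
end

section
/- Let a ∣ m and n = 2^m − 1. Suppose C is a binary linear [n, k, d] code with d ≥ 3·2^{a−1} whose coordinates partition into n/(2^a−1) blocks each lying in the [2^a−1, a, 2^{a−1}] binary Simplex code. Then k ≤ (a/(2^a−1))(2^m−1) − m. -/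
set_option maxHeartbeats 1000000 in
set_option synthInstance.maxHeartbeats 1000000 in
/-- Theorem 6 (Simplex locality): let `a ∣ m`, `n = 2^m − 1`, and let `C` be a
binary linear code of length `n` with minimum distance `d ≥ 3·2^{a−1}` whose
coordinates partition into `n/(2^a−1)` blocks each lying in the
`[2^a−1, a, 2^{a−1}]` binary Simplex code (a constant-weight code of dimension `a`).
Then `k ≤ (a/(2^a−1))(2^m−1) − m`. -/
theorem stmt9 (a m : ℕ) (ha : 0 < a) (ham : a ∣ m) (n : ℕ) (hn : n = 2 ^ m - 1)
    (L : Submodule (ZMod 2) (Fin (2 ^ a - 1) → ZMod 2))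
    (hLdim : Module.finrank (ZMod 2) L = a)
    (hLwt : ∀ x ∈ L, x ≠ 0 → hammingNorm x = 2 ^ (a - 1))
    (k d : ℕ)
    (C : Submodule (ZMod 2) (Fin (n / (2 ^ a - 1)) → Fin (2 ^ a - 1) → ZMod 2))
    (hk : Module.finrank (ZMod 2) C = k)
    (hblocks : ∀ c ∈ C, ∀ i, c i ∈ L)
    (hd : 3 * 2 ^ (a - 1) ≤ d)
    (hdist : ∀ c ∈ C, c ≠ 0 → d ≤ ∑ i, hammingNorm (c i)) :
    k ≤ a * ((2 ^ m - 1) / (2 ^ a - 1)) - m := by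
  subst hn
  -- basic arithmetic facts
  have hdvd : (2 ^ a - 1) ∣ (2 ^ m - 1) := by
    obtain ⟨t, rfl⟩ := ham
    have := Nat.sub_dvd_pow_sub_pow (2 ^ a) 1 t
    simpa [pow_mul] using this
  have hn'mul : ((2 ^ m - 1) / (2 ^ a - 1)) * (2 ^ a - 1) = 2 ^ m - 1 :=
    Nat.div_mul_cancel hdvd
  have hpos : 0 < 2 ^ (a - 1) := Nat.pow_pos (by norm_num)
  -- the map from (Fin n' → L) to the ambient space
  let φ : (Fin ((2 ^ m - 1) / (2 ^ a - 1)) → L) →ₗ[ZMod 2]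
      (Fin ((2 ^ m - 1) / (2 ^ a - 1)) → Fin (2 ^ a - 1) → ZMod 2) :=
    LinearMap.pi fun i => L.subtype ∘ₗ LinearMap.proj i
  have hφ : Function.Injective φ := by
    intro x y h
    funext i
    exact Subtype.ext (congrFun h i)
  have hφval : ∀ (v : Fin ((2 ^ m - 1) / (2 ^ a - 1)) → L) i,
      φ v i = (v i : Fin (2 ^ a - 1) → ZMod 2) := fun v i => rfl
  have hCrange : C ≤ LinearMap.range φ := by
    intro c hc
    exact ⟨fun i => ⟨c i, hblocks c hc i⟩, rfl⟩
  have hmapC' : (C.comap φ).map φ = C := Submodule.map_comap_eq_self hCrange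
  have hC'rank : Module.finrank (ZMod 2) (C.comap φ) = k := by
    have e1 : (C.comap φ) ≃ₗ[ZMod 2] ((C.comap φ).map φ) :=
      Submodule.equivMapOfInjective φ hφ (C.comap φ)
    have := e1.finrank_eq
    rw [hmapC', hk] at this
    exact this
  -- key: an element of C.comap φ with support of size ≤ 2 is zero
  have hkey : ∀ v ∈ C.comap φ, ∀ s : Finset (Fin ((2 ^ m - 1) / (2 ^ a - 1))),
      s.card ≤ 2 → (∀ i ∉ s, v i = 0) → v = 0 := by
    intro v hv s hs hsupp
    by_contra hvne
    have hwne : φ v ≠ 0 := fun h => hvne (hφ (by simpa using h))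
    have hle : d ≤ ∑ i, hammingNorm (φ v i) := hdist _ hv hwne
    have hsum : ∑ i, hammingNorm (φ v i) = ∑ i ∈ s, hammingNorm (φ v i) := by
      refine (Finset.sum_subset (Finset.subset_univ s) ?_).symm
      intro i _ hi
      rw [hφval, hsupp i hi]
      simp
    have hbound : ∑ i ∈ s, hammingNorm (φ v i) ≤ s.card * 2 ^ (a - 1) := by
      rw [Finset.card_eq_sum_ones, Finset.sum_mul, one_mul]
      refine Finset.sum_le_sum ?_
      intro i _
      rw [hφval]
      by_cases hvi : v i = 0
      · simp [hvi]
      · have : ((v i : Fin (2 ^ a - 1) → ZMod 2)) ≠ 0 := fun h => hvi (Subtype.ext h)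
        exact le_of_eq (hLwt _ (v i).2 this)
    have : d ≤ 2 * 2 ^ (a - 1) := by
      calc d ≤ s.card * 2 ^ (a - 1) := le_trans hle (hsum ▸ hbound)
        _ ≤ 2 * 2 ^ (a - 1) := Nat.mul_le_mul_right _ hs
    omega
  -- finiteness
  haveI : Module.Finite (ZMod 2) L := Module.finite_of_finrank_pos (by rw [hLdim]; exact ha)
  haveI : Finite L := Module.finite_of_finite (ZMod 2)
  haveI : Fintype L := Fintype.ofFinite L
  -- the injective map into the quotient
  let e : Option (Fin ((2 ^ m - 1) / (2 ^ a - 1)) × {x : L // x ≠ 0}) →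
      (Fin ((2 ^ m - 1) / (2 ^ a - 1)) → L) := fun p =>
    match p with
    | none => 0
    | some (i, x) => Pi.single i (x : L)
  have he : Function.Injective (fun p =>
      (Submodule.Quotient.mk (e p) :
        (Fin ((2 ^ m - 1) / (2 ^ a - 1)) → L) ⧸ C.comap φ)) := by
    intro p q hpq
    have hmem : e p - e q ∈ C.comap φ := by
      rwa [Submodule.Quotient.eq] at hpq
    have hsupp : ∃ s : Finset (Fin ((2 ^ m - 1) / (2 ^ a - 1))),
        s.card ≤ 2 ∧ ∀ i ∉ s, (e p - e q) i = 0 := by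
      match p, q with
      | none, none => exact ⟨∅, by simp, fun i _ => by simp [e]⟩
      | none, some (j, y) =>
        exact ⟨{j}, by simp, fun i hi => by
          simp only [Finset.mem_singleton] at hi
          simp [e, Pi.single_eq_of_ne hi]⟩
      | some (i0, x), none =>
        exact ⟨{i0}, by simp, fun i hi => by
          simp only [Finset.mem_singleton] at hi
          simp [e, Pi.single_eq_of_ne hi]⟩
      | some (i0, x), some (j, y) =>
        exact ⟨{i0, j}, Finset.card_le_two, fun i hi => by
          simp only [Finset.mem_insert, Finset.mem_singleton, not_or] at hi
          simp [e, Pi.single_eq_of_ne hi.1, Pi.single_eq_of_ne hi.2]⟩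
    obtain ⟨s, hs, hsupp⟩ := hsupp
    have hz : e p - e q = 0 := hkey _ hmem s hs hsupp
    have hepq : e p = e q := sub_eq_zero.mp hz
    -- injectivity of e
    match p, q with
    | none, none => rfl
    | none, some (j, y) =>
      exfalso
      have := congrFun hepq j
      simp [e, Pi.single_eq_same] at this
      exact y.2 this.symm
    | some (i0, x), none =>
      exfalso
      have := congrFun hepq i0
      simp [e, Pi.single_eq_same] at this
      exact x.2 this
    | some (i0, x), some (j, y) =>
      by_cases hij : i0 = j
      · subst hij
        have := congrFun hepq i0
        simp only [e, Pi.single_eq_same] at this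
        exact congrArg some (Prod.ext rfl (Subtype.ext this))
      · exfalso
        have := congrFun hepq i0
        rw [show (e (some (i0, x))) i0 = (x : L) from Pi.single_eq_same _ _,
          show (e (some (j, y))) i0 = 0 from Pi.single_eq_of_ne hij _] at this
        exact x.2 this
  -- cardinality computations
  have hcardL : Fintype.card L = 2 ^ a := by
    rw [Module.card_eq_pow_finrank (K := ZMod 2) (V := L), ZMod.card, hLdim]
  have hcarddom :
      Nat.card (Option (Fin ((2 ^ m - 1) / (2 ^ a - 1)) × {x : L // x ≠ 0})) = 2 ^ m := by
    rw [Nat.card_eq_fintype_card]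
    rw [Fintype.card_option, Fintype.card_prod, Fintype.card_fin]
    rw [Fintype.card_subtype_compl, Fintype.card_subtype_eq, hcardL]
    have h1 : 1 ≤ 2 ^ m := Nat.one_le_two_pow
    omega
  have hrankPi : Module.finrank (ZMod 2) (Fin ((2 ^ m - 1) / (2 ^ a - 1)) → L)
      = ((2 ^ m - 1) / (2 ^ a - 1)) * a := by
    rw [Module.finrank_pi_fintype]
    simp [hLdim, Finset.sum_const, Finset.card_univ]
  have hrankQ : Module.finrank (ZMod 2)
      ((Fin ((2 ^ m - 1) / (2 ^ a - 1)) → L) ⧸ C.comap φ) + k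
      = ((2 ^ m - 1) / (2 ^ a - 1)) * a := by
    have := Submodule.finrank_quotient_add_finrank (C.comap φ)
    rw [hC'rank, hrankPi] at this
    exact this
  haveI : Module.Finite (ZMod 2) ((Fin ((2 ^ m - 1) / (2 ^ a - 1)) → L) ⧸ C.comap φ) :=
    Module.Finite.quotient _ _
  haveI : Finite ((Fin ((2 ^ m - 1) / (2 ^ a - 1)) → L) ⧸ C.comap φ) :=
    Module.finite_of_finite (ZMod 2)
  haveI : Fintype ((Fin ((2 ^ m - 1) / (2 ^ a - 1)) → L) ⧸ C.comap φ) := Fintype.ofFinite _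
  have hcardQ : Nat.card ((Fin ((2 ^ m - 1) / (2 ^ a - 1)) → L) ⧸ C.comap φ)
      = 2 ^ (Module.finrank (ZMod 2) ((Fin ((2 ^ m - 1) / (2 ^ a - 1)) → L) ⧸ C.comap φ)) := by
    rw [Nat.card_eq_fintype_card, Module.card_eq_pow_finrank (K := ZMod 2), ZMod.card]
  have hle : (2 : ℕ) ^ m
      ≤ 2 ^ (Module.finrank (ZMod 2) ((Fin ((2 ^ m - 1) / (2 ^ a - 1)) → L) ⧸ C.comap φ)) := by
    have := Nat.card_le_card_of_injective _ he
    rwa [hcarddom, hcardQ] at this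
  have hm : m ≤ Module.finrank (ZMod 2) ((Fin ((2 ^ m - 1) / (2 ^ a - 1)) → L) ⧸ C.comap φ) :=
    (Nat.pow_le_pow_iff_right (by norm_num)).mp hle
  rw [Nat.mul_comm]
  omega
end

section
/- Let q ≥ 3 be a prime power, let 2 ∣ m, and let n = q^m − 1. Suppose C is a linear [n, k, d] code over F_q with d ≥ 3(q^2 − q) whose coordinates partition into n/(q^2−1) blocks each lying in the [q^2−1, 2, q^2−q] shortened first-order Reed–Muller code over F_q. Then k ≤ 2(q^m−1)/(q^2−1) − m. -/
set_option maxHeartbeats 1000000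
set_option synthInstance.maxHeartbeats 400000

/-- Theorem 9 (Reed–Muller locality): let `q = |F| ≥ 3`, `2 ∣ m`, `n = q^m − 1`,
and let `C` be a `q`-ary linear code of length `n` with minimum distance
`d ≥ 3(q²−q)` whose coordinates partition into `n/(q²−1)` blocks each lying in the
`[q²−1, 2, q²−q]` shortened first-order Reed–Muller code (a constant-weight code of
dimension `2`). Then `k ≤ 2(q^m−1)/(q²−1) − m`. -/
theorem stmt13 (F : Type*) [Field F] [Fintype F] [DecidableEq F]
    (hq : 3 ≤ Fintype.card F) (m : ℕ) (hm2 : 2 ∣ m) (hm : 0 < m)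
    (n : ℕ) (hn : n = Fintype.card F ^ m - 1)
    (L : Submodule F (Fin (Fintype.card F ^ 2 - 1) → F))
    (hLdim : Module.finrank F L = 2)
    (hLwt : ∀ x ∈ L, x ≠ 0 →
      hammingNorm x = Fintype.card F ^ 2 - Fintype.card F)
    (k d : ℕ)
    (C : Submodule F
      (Fin (n / (Fintype.card F ^ 2 - 1)) → Fin (Fintype.card F ^ 2 - 1) → F))
    (hk : Module.finrank F C = k)
    (hblocks : ∀ c ∈ C, ∀ i, c i ∈ L)
    (hd : 3 * (Fintype.card F ^ 2 - Fintype.card F) ≤ d)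
    (hdist : ∀ c ∈ C, c ≠ 0 → d ≤ ∑ i, hammingNorm (c i)) :
    k ≤ 2 * ((Fintype.card F ^ m - 1) / (Fintype.card F ^ 2 - 1)) - m := by
  classical
  have hq2 : 2 ≤ Fintype.card F := by omega
  have hqq : Fintype.card F < Fintype.card F ^ 2 := by nlinarith
  have hwpos : 0 < Fintype.card F ^ 2 - Fintype.card F := by omega
  -- the projection map g : (Fin N → L) → ambient
  let g : (Fin (n / (Fintype.card F ^ 2 - 1)) → L) →ₗ[F]
      (Fin (n / (Fintype.card F ^ 2 - 1)) → Fin (Fintype.card F ^ 2 - 1) → F) :=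
    LinearMap.pi (fun i => L.subtype.comp (LinearMap.proj i))
  have hgapp : ∀ (z : Fin (n / (Fintype.card F ^ 2 - 1)) → L) i,
      g z i = (z i : Fin (Fintype.card F ^ 2 - 1) → F) := by
    intro z i; rfl
  let C' : Submodule F (Fin (n / (Fintype.card F ^ 2 - 1)) → L) := C.comap g
  -- Step A : k ≤ finrank C'
  let φ : C →ₗ[F] (Fin (n / (Fintype.card F ^ 2 - 1)) → L) :=
    LinearMap.pi (fun i =>
      LinearMap.codRestrict L ((LinearMap.proj i).comp C.subtype)
        (fun c => hblocks c.1 c.2 i))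
  have hgφ : ∀ c : C, g (φ c) = (c : _) := by
    intro c; rfl
  have hφmem : ∀ c : C, φ c ∈ C' := by
    intro c
    simp only [C', Submodule.mem_comap, hgφ]
    exact c.2
  have hkA : k ≤ Module.finrank F C' := by
    rw [← hk]
    apply LinearMap.finrank_le_finrank_of_injective
      (f := (φ.codRestrict C' hφmem))
    intro a b hab
    have h1 : φ a = φ b := congrArg Subtype.val hab
    apply Subtype.ext
    rw [← hgφ a, ← hgφ b, h1]
  -- key lemma: no nonzero element of C' supported on ≤ 2 blocks
  have key : ∀ z, z ∈ C' → z ≠ 0 →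
      ∀ i j, (∀ t, t ≠ i → t ≠ j → z t = 0) → False := by
    intro z hz hz0 i j hsupp
    have hgz : g z ∈ C := hz
    have hgz0 : g z ≠ 0 := by
      intro h0
      apply hz0
      funext t
      have h2 : g z t = 0 := by rw [h0]; rfl
      rw [hgapp] at h2
      exact Subtype.ext h2
    have hdle := hdist (g z) hgz hgz0
    have hbound : ∀ t, hammingNorm (g z t) ≤ Fintype.card F ^ 2 - Fintype.card F := by
      intro t
      rw [hgapp]
      by_cases h : z t = 0
      · rw [h]; simp
      · rw [hLwt (z t) (z t).2 (fun h' => h (Subtype.ext h'))]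
    have hsum : ∑ t, hammingNorm (g z t) ≤ 2 * (Fintype.card F ^ 2 - Fintype.card F) := by
      have h1 : ∑ t, hammingNorm (g z t)
          = ∑ t ∈ ({i, j} : Finset _), hammingNorm (g z t) := by
        symm
        apply Finset.sum_subset (Finset.subset_univ _)
        intro t _ ht
        simp only [Finset.mem_insert, Finset.mem_singleton, not_or] at ht
        rw [hgapp, hsupp t ht.1 ht.2]
        simp
      rw [h1]
      calc ∑ t ∈ ({i, j} : Finset _), hammingNorm (g z t)
          ≤ ({i, j} : Finset _).card * (Fintype.card F ^ 2 - Fintype.card F) :=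
            Finset.sum_le_card_nsmul _ _ _ (fun t _ => hbound t)
        _ ≤ 2 * (Fintype.card F ^ 2 - Fintype.card F) := by
            have h2 : ({i, j} : Finset _).card ≤ 2 :=
              le_trans (Finset.card_insert_le _ _) (by simp)
            exact Nat.mul_le_mul_right _ h2
    omega
  -- finiteness
  have hLfin : Fintype L := Fintype.ofFinite L
  have hQfin : Finite ((Fin (n / (Fintype.card F ^ 2 - 1)) → L) ⧸ C') := Quotient.finite _
  have hQfin' : Fintype ((Fin (n / (Fintype.card F ^ 2 - 1)) → L) ⧸ C') := Fintype.ofFinite _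
  -- the injection
  let f : Option (Fin (n / (Fintype.card F ^ 2 - 1)) × {x : L // x ≠ 0}) →
      ((Fin (n / (Fintype.card F ^ 2 - 1)) → L) ⧸ C') :=
    fun e => match e with
      | none => 0
      | some (i, x) => Submodule.Quotient.mk (Pi.single i x.1)
  have hfinj : Function.Injective f := by
    intro a b hab
    match a, b with
    | none, none => rfl
    | none, some (i, x) =>
        exfalso
        have h3 : (Pi.single i x.1 : Fin (n / (Fintype.card F ^ 2 - 1)) → L) ∈ C' := by
          have h4 := hab.symm
          simp only [f] at h4
          rwa [Submodule.Quotient.mk_eq_zero] at h4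
        refine key _ h3 ?_ i i ?_
        · intro h0
          have h5 := congrFun h0 i
          rw [Pi.single_eq_same] at h5
          exact x.2 h5
        · intro t ht _; exact Pi.single_eq_of_ne ht _
    | some (i, x), none =>
        exfalso
        have h3 : (Pi.single i x.1 : Fin (n / (Fintype.card F ^ 2 - 1)) → L) ∈ C' := by
          simp only [f] at hab
          rwa [Submodule.Quotient.mk_eq_zero] at hab
        refine key _ h3 ?_ i i ?_
        · intro h0
          have h5 := congrFun h0 i
          rw [Pi.single_eq_same] at h5
          exact x.2 h5
        · intro t ht _; exact Pi.single_eq_of_ne ht _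
    | some (i, x), some (j, y) =>
        simp only [f] at hab
        rw [Submodule.Quotient.eq] at hab
        by_cases hz : (Pi.single i x.1 - Pi.single j y.1 :
            Fin (n / (Fintype.card F ^ 2 - 1)) → L) = 0
        · have heq : (Pi.single i x.1 : Fin (n / (Fintype.card F ^ 2 - 1)) → L)
              = Pi.single j y.1 := sub_eq_zero.mp hz
          have hij : i = j := by
            by_contra hij
            have h5 := congrFun heq i
            rw [Pi.single_eq_same, Pi.single_eq_of_ne hij] at h5
            exact x.2 h5
          subst hij
          have h5 := congrFun heq i
          rw [Pi.single_eq_same, Pi.single_eq_same] at h5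
          exact congrArg some (Prod.ext rfl (Subtype.ext h5))
        · exfalso
          refine key _ hab hz i j ?_
          intro t hti htj
          simp [Pi.single_eq_of_ne hti, Pi.single_eq_of_ne htj]
  -- cardinality computations
  have hcardL : Fintype.card L = Fintype.card F ^ 2 := by
    rw [Module.card_eq_pow_finrank (K := F) (V := L), hLdim]
  have hcardnz : Fintype.card {x : L // x ≠ 0} = Fintype.card F ^ 2 - 1 := by
    have h8 : Fintype.card {x : L // x ≠ 0} = Fintype.card L - 1 := by
      simpa using Set.card_ne_eq (0 : L)
    rw [h8, hcardL]
  have hcardE : Fintype.card (Option (Fin (n / (Fintype.card F ^ 2 - 1)) × {x : L // x ≠ 0}))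
      = (n / (Fintype.card F ^ 2 - 1)) * (Fintype.card F ^ 2 - 1) + 1 := by
    rw [Fintype.card_option, Fintype.card_prod, Fintype.card_fin, hcardnz]
  -- divisibility
  obtain ⟨m', hm'⟩ := hm2
  have hdvd : Fintype.card F ^ 2 - 1 ∣ Fintype.card F ^ m - 1 := by
    have h6 := Nat.sub_dvd_pow_sub_pow (Fintype.card F ^ 2) 1 m'
    rwa [one_pow, ← pow_mul, ← hm'] at h6
  have hNval : (n / (Fintype.card F ^ 2 - 1)) * (Fintype.card F ^ 2 - 1)
      = Fintype.card F ^ m - 1 := by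
    rw [hn]; exact Nat.div_mul_cancel hdvd
  have hqm1 : 1 ≤ Fintype.card F ^ m := Nat.one_le_pow _ _ (by omega)
  -- quotient dimension
  have hrankM : Module.finrank F (Fin (n / (Fintype.card F ^ 2 - 1)) → L)
      = 2 * (n / (Fintype.card F ^ 2 - 1)) := by
    rw [Module.finrank_pi_fintype]
    simp [hLdim, Finset.sum_const, mul_comm]
  have hrankQ : Module.finrank F ((Fin (n / (Fintype.card F ^ 2 - 1)) → L) ⧸ C')
      + Module.finrank F C' = 2 * (n / (Fintype.card F ^ 2 - 1)) := by
    rw [Submodule.finrank_quotient_add_finrank, hrankM]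
  have hcardQ : Fintype.card ((Fin (n / (Fintype.card F ^ 2 - 1)) → L) ⧸ C')
      = Fintype.card F ^ (Module.finrank F ((Fin (n / (Fintype.card F ^ 2 - 1)) → L) ⧸ C')) :=
    Module.card_eq_pow_finrank (K := F)
  have hle := Fintype.card_le_of_injective f hfinj
  rw [hcardE, hcardQ, hNval] at hle
  have h1 : Fintype.card F ^ m
      ≤ Fintype.card F ^ (Module.finrank F ((Fin (n / (Fintype.card F ^ 2 - 1)) → L) ⧸ C')) := by
    omega
  have h2 : m ≤ Module.finrank F ((Fin (n / (Fintype.card F ^ 2 - 1)) → L) ⧸ C') :=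
    (Nat.pow_le_pow_iff_right (by omega)).mp h1
  have h7 : n / (Fintype.card F ^ 2 - 1) = (Fintype.card F ^ m - 1) / (Fintype.card F ^ 2 - 1) := by
    rw [hn]
  omega
end

section
/- Concatenating an outer [2^r+1, 2^r−1, 3] Hamming code over F_{2^r} with an inner [r+1, r, 2] binary single-parity-check code yields a binary linear [(2^r+1)(r+1), (2^r−1)r, d] code with d ≥ 6 that is r-local. -/
lemma spc_norm {m : ℕ} (y : Fin m → ZMod 2) (hy : y ≠ 0) (hs : ∑ j, y j = 0) :
    2 ≤ hammingNorm y := by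
  have hone : ∀ z : ZMod 2, z ≠ 0 → z = 1 := by decide
  have h1 : ∑ j, y j = (hammingNorm y : ZMod 2) := by
    rw [hammingNorm, ← Finset.sum_filter_ne_zero]
    rw [Finset.sum_congr rfl (fun j hj => hone _ (by simpa using hj))]
    simp
  rw [h1] at hs
  have hdvd : 2 ∣ hammingNorm y := (ZMod.natCast_eq_zero_iff _ _).mp hs
  have hpos : 0 < hammingNorm y := hammingNorm_pos_iff.mpr hy
  omega

/-- Construction 4: concatenating an outer `[2^r+1, 2^r−1, 3]` Hamming code over
`F_{2^r}` with an inner `[r+1, r, 2]` binary single-parity-check code (via an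
injective `F₂`-linear encoding `E` whose range is the SPC code) yields a binary
linear `[(2^r+1)(r+1), (2^r−1)r, ≥6]` code that is `r`-local: every coordinate
lies in the support of a parity check of weight at most `r+1`. -/
theorem stmt15 (r : ℕ) (hr : 0 < r)
    (K : Type*) [Field K] [Fintype K] [DecidableEq K] [Algebra (ZMod 2) K]
    (hK : Fintype.card K = 2 ^ r)
    (outer : Submodule K (Fin (2 ^ r + 1) → K))
    (houterdim : Module.finrank K outer = 2 ^ r - 1)
    (houterdist : ∀ c ∈ outer, c ≠ 0 → 3 ≤ hammingNorm c)
    (E : K →ₗ[ZMod 2] (Fin (r + 1) → ZMod 2))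
    (hEinj : Function.Injective E)
    (hErange : ∀ y : Fin (r + 1) → ZMod 2, (∃ x, E x = y) ↔ ∑ j, y j = 0) :
    ∃ C : Submodule (ZMod 2) (Fin (2 ^ r + 1) → Fin (r + 1) → ZMod 2),
      (C : Set (Fin (2 ^ r + 1) → Fin (r + 1) → ZMod 2)) =
        {w | ∃ c ∈ outer, w = fun i => E (c i)} ∧
      Module.finrank (ZMod 2) C = (2 ^ r - 1) * r ∧
      (∀ w ∈ C, w ≠ 0 → 6 ≤ ∑ i, hammingNorm (w i)) ∧
      (∀ p : Fin (2 ^ r + 1) × Fin (r + 1),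
        ∃ S : Finset (Fin (2 ^ r + 1) × Fin (r + 1)),
          p ∈ S ∧ S.card ≤ r + 1 ∧ ∀ w ∈ C, ∑ s ∈ S, w s.1 s.2 = 0) := by
  set L : (Fin (2 ^ r + 1) → K) →ₗ[ZMod 2] (Fin (2 ^ r + 1) → Fin (r + 1) → ZMod 2) :=
    LinearMap.pi fun i => E.comp (((LinearMap.proj i : (Fin (2 ^ r + 1) → K) →ₗ[K] K)).restrictScalars (ZMod 2)) with hL
  have hLapp : ∀ c, L c = fun i => E (c i) := fun c => rfl
  have hLinj : Function.Injective L := fun c c' h => funext fun i => hEinj (congrFun h i)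
  refine ⟨(outer.restrictScalars (ZMod 2)).map L, ?_, ?_, ?_, ?_⟩
  · ext w
    simp only [SetLike.mem_coe, Submodule.mem_map, Submodule.restrictScalars_mem,
      Set.mem_setOf_eq, hLapp]
    exact ⟨fun ⟨c, hc, h⟩ => ⟨c, hc, h.symm⟩, fun ⟨c, hc, h⟩ => ⟨c, hc, h.symm⟩⟩
  · have hKr : Module.finrank (ZMod 2) K = r := by
      have h := Module.card_eq_pow_finrank (K := ZMod 2) (V := K)
      rw [hK, ZMod.card] at h
      exact (Nat.pow_right_injective le_rfl h.symm)
    have e1 := (Submodule.equivMapOfInjective L hLinj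
      (outer.restrictScalars (ZMod 2))).finrank_eq
    have e2 := ((Submodule.restrictScalarsEquiv (ZMod 2) K _ outer).restrictScalars (ZMod 2)).finrank_eq
    rw [← e1, e2, ← Module.finrank_mul_finrank (ZMod 2) K outer, hKr, houterdim, mul_comm]
  · rintro w hw hw0
    obtain ⟨c, hc, rfl⟩ := hw
    have hc0 : c ≠ 0 := by rintro rfl; exact hw0 (map_zero L)
    have h3 := houterdist c hc hc0
    have hterm : ∀ i ∈ ({i | c i ≠ 0} : Finset _), 2 ≤ hammingNorm (L c i) := by
      intro i hi
      have hci : c i ≠ 0 := by simpa using hi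
      refine spc_norm _ (fun h => hci (hEinj (by rw [hLapp] at h; simpa [map_zero] using h)))
        ((hErange _).mp ⟨c i, rfl⟩)
    calc (6 : ℕ) = 2 * 3 := rfl
      _ ≤ 2 * hammingNorm c := by omega
      _ = ∑ i ∈ ({i | c i ≠ 0} : Finset _), 2 := by
          rw [Finset.sum_const, smul_eq_mul, mul_comm]; rfl
      _ ≤ ∑ i ∈ ({i | c i ≠ 0} : Finset _), hammingNorm (L c i) :=
          Finset.sum_le_sum hterm
      _ ≤ ∑ i, hammingNorm (L c i) :=
          Finset.sum_le_sum_of_subset (Finset.subset_univ _)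
  · rintro ⟨i, j⟩
    refine ⟨{i} ×ˢ Finset.univ, by simp, by simp, ?_⟩
    rintro w ⟨c, hc, rfl⟩
    rw [Finset.sum_product, Finset.sum_singleton]
    exact (hErange (E (c i))).mp ⟨c i, rfl⟩
end

section
/- The minimum distance of a concatenation of an outer [N, K, D] code over F_{q^k} with an inner [n, k, d] code over F_q (using a fixed F_q-linear bijection F_{q^k} → inner code) is at least D·d. -/
/-- The minimum distance of the concatenation of an outer `[N, K, D]` code over
`F_{q^k}` with an inner `[n, k, d]` code over `F_q` (via a fixed injective
`F_q`-linear encoding `E` of `F_{q^k}` onto the inner code) is at least `D·d`. -/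
theorem stmt16 {F K : Type*} [Field F] [Field K] [Algebra F K]
    [DecidableEq F] [DecidableEq K]
    {N n k D d : ℕ} (hk : Module.finrank F K = k)
    (E : K →ₗ[F] (Fin n → F)) (hEinj : Function.Injective E)
    (hinner : ∀ x : K, x ≠ 0 → d ≤ hammingNorm (E x))
    (outer : Submodule K (Fin N → K))
    (houter : ∀ c ∈ outer, c ≠ 0 → D ≤ hammingNorm c) :
    ∀ c ∈ outer, c ≠ 0 → D * d ≤ ∑ i, hammingNorm (E (c i)) := by
  intro c hc hc0
  have h1 : D ≤ hammingNorm c := houter c hc hc0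
  calc D * d ≤ hammingNorm c * d := Nat.mul_le_mul_right d h1
    _ = ∑ i ∈ Finset.univ.filter (fun i => c i ≠ 0), d := by
        rw [Finset.sum_const, smul_eq_mul, hammingNorm]
    _ ≤ ∑ i ∈ Finset.univ.filter (fun i => c i ≠ 0), hammingNorm (E (c i)) := by
        apply Finset.sum_le_sum
        intro i hi
        exact hinner _ (Finset.mem_filter.mp hi).2
    _ ≤ ∑ i, hammingNorm (E (c i)) :=
        Finset.sum_le_sum_of_subset (Finset.filter_subset _ _)
end

section
/- Let n be coprime to q and let C be a q-ary cyclic code of length n whose defining set contains d−1 consecutive integers modulo n, i.e., {b, b+1, …, b+d−2} mod n for some b. Then the minimum distance of C is at least d. -/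
/-- BCH bound: let `gcd(n, q) = 1` and let `C` be a `q`-ary cyclic code of length
`n` whose defining set `D` (zeros at powers `α^i` of a primitive `n`-th root of
unity `α`) contains `d−1` consecutive integers `b, b+1, …, b+d−2` modulo `n`.
Then the minimum distance of `C` is at least `d`. -/
theorem stmt17 (Fq : Type*) [Field Fq] [Fintype Fq] [DecidableEq Fq]
    (F : Type*) [Field F] [Algebra Fq F]
    (n : ℕ) (hn : 0 < n) (hcop : Nat.Coprime n (Fintype.card Fq))
    (α : F) (hα : IsPrimitiveRoot α n)
    (D : Finset ℕ) (d b : ℕ)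
    (C : Submodule Fq (Fin n → Fq))
    (hC : ∀ c ∈ C, ∀ i ∈ D,
      ∑ j : Fin n, algebraMap Fq F (c j) * α ^ (i * (j : ℕ)) = 0)
    (hconsec : ∀ l < d - 1, (b + l) % n ∈ D) :
    ∀ c ∈ C, c ≠ 0 → d ≤ hammingNorm c := by
  intro c hc hc0
  by_contra hlt
  push_neg at hlt
  -- support of c
  set S : Finset (Fin n) := Finset.univ.filter (fun i => c i ≠ 0) with hS
  have hScard : S.card = hammingNorm c := rfl
  have hαn : α ^ n = 1 := hα.pow_eq_one
  have hα0 : α ≠ 0 := hα.ne_zero hn.ne'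
  -- reduce exponents mod n
  have hmod : ∀ m j : ℕ, α ^ ((m % n) * j) = α ^ (m * j) := by
    intro m j
    conv_rhs => rw [← Nat.div_add_mod m n]
    rw [add_mul, pow_add, mul_assoc, pow_mul, pow_mul, hαn, one_pow, one_mul]
  -- the equivalence with the support
  set e : Fin S.card ≃ {x // x ∈ S} := S.equivFin.symm with he
  set f : Fin S.card → F := fun k => α ^ ((e k : Fin n) : ℕ) with hf
  set v : Fin S.card → F :=
    fun k => α ^ (b * ((e k : Fin n) : ℕ)) * algebraMap Fq F (c (e k)) with hv
  have hfinj : Function.Injective f := by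
    intro k₁ k₂ hkk
    have h1 : ((e k₁ : Fin n) : ℕ) = ((e k₂ : Fin n) : ℕ) :=
      hα.pow_inj (e k₁ : Fin n).isLt (e k₂ : Fin n).isLt hkk
    exact e.injective (Subtype.ext (Fin.ext h1))
  have hdet : ((Matrix.vandermonde f).transpose).det ≠ 0 := by
    rw [Matrix.det_transpose]
    exact Matrix.det_vandermonde_ne_zero_iff.mpr hfinj
  have hveq : v = 0 := by
    apply Matrix.eq_zero_of_mulVec_eq_zero hdet
    funext l
    have hld : (l : ℕ) < d - 1 := by
      have := l.isLt
      omega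
    have hrow := hC c hc ((b + (l : ℕ)) % n) (hconsec _ hld)
    have key : ∑ k : Fin S.card, f k ^ (l : ℕ) * v k
        = ∑ j : Fin n, algebraMap Fq F (c j) * α ^ (((b + (l : ℕ)) % n) * (j : ℕ)) := by
      have h1 : ∀ k : Fin S.card, f k ^ (l : ℕ) * v k
          = (fun j : Fin n =>
              algebraMap Fq F (c j) * α ^ (((b + (l : ℕ)) % n) * (j : ℕ))) (e k) := by
        intro k
        simp only [hf, hv]
        have hexp : ((e k : Fin n) : ℕ) * (l : ℕ) + b * ((e k : Fin n) : ℕ)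
            = (b + (l : ℕ)) * ((e k : Fin n) : ℕ) := by ring
        rw [hmod, ← pow_mul, ← mul_assoc, ← pow_add, hexp, mul_comm]
      rw [Finset.sum_congr rfl fun k _ => h1 k]
      rw [Equiv.sum_comp e
        (fun x : {x // x ∈ S} => (fun j : Fin n =>
          algebraMap Fq F (c j) * α ^ (((b + (l : ℕ)) % n) * (j : ℕ))) (x : Fin n))]
      beta_reduce
      rw [Finset.sum_coe_sort S
        (fun j : Fin n => algebraMap Fq F (c j) * α ^ (((b + (l : ℕ)) % n) * (j : ℕ)))]
      apply Finset.sum_subset (Finset.subset_univ S)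
      intro j _ hjS
      have : c j = 0 := by
        by_contra hcj
        exact hjS (by simp [hS, hcj])
      simp [this]
    have : ((Matrix.vandermonde f).transpose).mulVec v l = ∑ k : Fin S.card, f k ^ (l : ℕ) * v k := by
      simp [Matrix.mulVec, Matrix.vandermonde, dotProduct, Matrix.transpose_apply]
    rw [this, key, hrow]
    rfl
  -- contradiction: some coordinate of v is nonzero
  obtain ⟨j0, hj0⟩ := Function.ne_iff.mp hc0
  simp only [Pi.zero_apply] at hj0
  have hj0S : j0 ∈ S := by simp [hS, hj0]
  have hv0 := congrFun hveq (e.symm ⟨j0, hj0S⟩)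
  simp only [hv, Pi.zero_apply, Equiv.apply_symm_apply] at hv0
  rcases mul_eq_zero.mp hv0 with h | h
  · exact pow_ne_zero _ hα0 h
  · exact hj0 (by simpa using (algebraMap Fq F).injective (h.trans (map_zero _).symm))
end

section
/- Let 3 ∣ m and n = 2^m − 1. The binary cyclic code with defining set D = ∪_{j=0}^{n/7−1} (D_L + 7j) ∪ C_1, where D_L = {0,3,5,6} is the defining set of the [7,3,4] Simplex code and C_1 = {1,2,4,…,2^{m−1}} is the 2-cyclotomic coset of 1 mod n, has dimension k = 3n/7 − m and minimum distance at least 12. -/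
open Polynomial Matrix

lemma aux_coeff_finsum {R : Type*} [Semiring R] {k : ℕ} (c : Fin k → R) (j : ℕ) :
    (∑ t : Fin k, Polynomial.C (c t) * Polynomial.X ^ (t : ℕ)).coeff j =
      if h : j < k then c ⟨j, h⟩ else 0 := by
  rw [Polynomial.finset_sum_coeff]
  simp only [Polynomial.coeff_C_mul, Polynomial.coeff_X_pow, mul_ite, mul_one, mul_zero]
  split
  · next h =>
    rw [Finset.sum_eq_single (⟨j, h⟩ : Fin k)]
    · simp
    · intro b _ hb
      simp only [ite_eq_right_iff]
      intro hbj
      exact absurd (Fin.ext hbj.symm) hb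
    · simp
  · next h =>
    refine Finset.sum_eq_zero fun t _ => ?_
    simp only [ite_eq_right_iff]
    intro ht; omega

lemma aux_degree_finsum {R : Type*} [Semiring R] {k : ℕ} (c : Fin k → R) :
    (∑ t : Fin k, Polynomial.C (c t) * Polynomial.X ^ (t : ℕ)).degree < (k : WithBot ℕ) := by
  rw [Polynomial.degree_lt_iff_coeff_zero]
  intro j hj
  rw [aux_coeff_finsum]
  rw [dif_neg (by omega)]

lemma aux_sum_coeff {R : Type*} [Semiring R] (f : R[X]) (k : ℕ) (h : f.degree < (k : WithBot ℕ)) :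
    ∑ j : Fin k, Polynomial.C (f.coeff (j : ℕ)) * Polynomial.X ^ (j : ℕ) = f := by
  by_cases hf : f = 0
  · simp [hf]
  · rw [← Finset.sum_range (fun j => Polynomial.C (f.coeff j) * Polynomial.X ^ j)]
    conv_rhs => rw [f.as_sum_range' k ((Polynomial.natDegree_lt_iff_degree_lt hf).2 h)]
    simp [Polynomial.C_mul_X_pow_eq_monomial]

lemma aux_cyclic_dim {F : Type*} [Field F] [CharP F 2] {n : ℕ} (hn : 0 < n) (hodd : Odd n)
    {α : F} (hα : IsPrimitiveRoot α n) (D : Finset ℕ)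
    (hDn : ∀ i ∈ D, i < n) (hDcl : ∀ i ∈ D, 2 * i % n ∈ D)
    (C : Submodule (ZMod 2) (Fin n → ZMod 2))
    (hC : (C : Set (Fin n → ZMod 2)) =
      {c | ∀ i ∈ D,
        ∑ j : Fin n, (ZMod.castHom (dvd_refl 2) F) (c j) * α ^ (i * (j : ℕ)) = 0}) :
    Module.finrank (ZMod 2) C = n - D.card := by
  classical
  set φ : ZMod 2 →+* F := ZMod.castHom (dvd_refl 2) F with hφdef
  have hφ : Function.Injective φ := ZMod.castHom_injective F
  have hα1 : α ^ n = 1 := hα.pow_eq_one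
  have hαmod : ∀ a : ℕ, α ^ (a % n) = α ^ a := by
    intro a
    conv_rhs => rw [← Nat.div_add_mod a n, pow_add, pow_mul, hα1, one_pow, one_mul]
  -- the generator polynomial over F
  set g : F[X] := ∏ i ∈ D, (X - Polynomial.C (α ^ i)) with hg
  have hgmonic : g.Monic := Polynomial.monic_prod_of_monic _ _ fun i _ => monic_X_sub_C _
  have hgdeg : g.natDegree = D.card := by
    rw [hg, Polynomial.natDegree_prod _ _ fun i _ => X_sub_C_ne_zero _]
    rw [Finset.sum_congr rfl fun i _ => Polynomial.natDegree_X_sub_C (α ^ i)]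
    simp
  -- injectivity of doubling on D
  have hσ : Set.InjOn (fun i => 2 * i % n) D := by
    intro i hi i' hi' hii
    have hcop : Nat.gcd n 2 = 1 := (Nat.coprime_two_right).2 hodd
    have h2 : i ≡ i' [MOD n] := Nat.ModEq.cancel_left_of_coprime hcop hii
    have := hDn i hi; have := hDn i' hi'
    rwa [Nat.ModEq, Nat.mod_eq_of_lt, Nat.mod_eq_of_lt] at h2 <;> omega
  have himg : D.image (fun i => 2 * i % n) = D := by
    refine Finset.eq_of_subset_of_card_le (fun x hx => ?_) ?_
    · obtain ⟨i, hi, rfl⟩ := Finset.mem_image.1 hx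
      exact hDcl i hi
    · rw [Finset.card_image_of_injOn hσ]
  -- Frobenius invariance
  have hfrob : g.map (frobenius F 2) = g := by
    rw [hg, Polynomial.map_prod]
    have step : ∀ i ∈ D, (X - Polynomial.C (α ^ i)).map (frobenius F 2) =
        X - Polynomial.C (α ^ (2 * i % n)) := by
      intro i _
      rw [Polynomial.map_sub, Polynomial.map_X, Polynomial.map_C, frobenius_def]
      rw [hαmod, ← pow_mul, mul_comm i 2]
    rw [Finset.prod_congr rfl step]
    calc ∏ i ∈ D, (X - Polynomial.C (α ^ (2 * i % n)))
        = ∏ i ∈ D.image (fun i => 2 * i % n), (X - Polynomial.C (α ^ i)) := by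
          rw [Finset.prod_image (fun i hi i' hi' h => hσ hi hi' h)]
      _ = g := by rw [himg, hg]
  have hcoef : ∀ k, g.coeff k = 0 ∨ g.coeff k = 1 := by
    intro k
    have h1 : (g.map (frobenius F 2)).coeff k = g.coeff k := by rw [hfrob]
    rw [Polynomial.coeff_map, frobenius_def] at h1
    have h2 : g.coeff k * (g.coeff k - 1) = 0 := by ring_nf; linear_combination h1
    rcases mul_eq_zero.1 h2 with h | h
    · exact Or.inl h
    · exact Or.inr (sub_eq_zero.1 h)
  -- the generator polynomial over ZMod 2
  set g₀ : (ZMod 2)[X] :=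
    ∑ k ∈ Finset.range (g.natDegree + 1), Polynomial.C (if g.coeff k = 1 then 1 else 0) * X ^ k with hg₀
  have hmap : g₀.map φ = g := by
    rw [hg₀, Polynomial.map_sum]
    simp only [Polynomial.map_mul, Polynomial.map_C, Polynomial.map_pow, Polynomial.map_X]
    have hval : ∀ k, φ (if g.coeff k = 1 then 1 else 0) = g.coeff k := by
      intro k
      rcases hcoef k with h | h <;> simp [h]
    simp only [hval]
    conv_rhs => rw [g.as_sum_range' (g.natDegree + 1) (lt_add_one _)]
    simp [Polynomial.C_mul_X_pow_eq_monomial]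
  have hg₀deg : g₀.natDegree = D.card := by
    rw [← hgdeg, ← hmap, Polynomial.natDegree_map_eq_of_injective hφ]
  have hg₀monic : g₀.Monic := by
    have h1 : φ g₀.leadingCoeff = 1 := by
      rw [← Polynomial.leadingCoeff_map_of_injective hφ, hmap]; exact hgmonic
    have := hφ (h1.trans (map_one φ).symm)
    exact this
  have hg₀ne : g₀ ≠ 0 := hg₀monic.ne_zero
  have hdn : D.card ≤ n := by
    calc D.card ≤ (Finset.range n).card :=
          Finset.card_le_card fun i hi => Finset.mem_range.2 (hDn i hi)
      _ = n := Finset.card_range n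
  -- evaluation of the polynomial attached to a codeword
  have heval : ∀ (c : Fin n → ZMod 2) (i : ℕ),
      ((∑ j : Fin n, Polynomial.C (c j) * X ^ (j : ℕ)).map φ).eval (α ^ i) =
        ∑ j : Fin n, φ (c j) * α ^ (i * (j : ℕ)) := by
    intro c i
    rw [Polynomial.map_sum, Polynomial.eval_finset_sum]
    refine Finset.sum_congr rfl fun j _ => ?_
    simp [pow_mul]
  have hmem : ∀ c : Fin n → ZMod 2,
      c ∈ C ↔ g₀ ∣ ∑ j : Fin n, Polynomial.C (c j) * X ^ (j : ℕ) := by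
    intro c
    have hc : c ∈ C ↔ ∀ i ∈ D,
        ∑ j : Fin n, φ (c j) * α ^ (i * (j : ℕ)) = 0 := by
      rw [← SetLike.mem_coe, hC]; exact Iff.rfl
    rw [hc]
    constructor
    · intro h
      rw [← Polynomial.map_dvd_map φ hφ hg₀monic, hmap, hg]
      refine Finset.prod_dvd_of_coprime ?_ ?_
      · intro i hi i' hi' hne
        simp only [Function.onFun]
        refine Polynomial.isCoprime_X_sub_C_of_isUnit_sub (isUnit_iff_ne_zero.2 ?_)
        refine sub_ne_zero.2 fun hee => ?_
        exact hne (hα.pow_inj (hDn i hi) (hDn i' hi') hee)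
      · intro i hi
        rw [Polynomial.dvd_iff_isRoot]
        exact (heval c i).trans (h i hi)
    · rintro ⟨q, hq⟩ i hi
      rw [← heval, hq, Polynomial.map_mul, hmap, Polynomial.eval_mul, hg,
        Polynomial.eval_prod, Finset.prod_eq_zero hi (by simp), zero_mul]
  -- the linear parametrization
  set k := n - D.card with hk
  set e := Polynomial.degreeLTEquiv (ZMod 2) k with he
  set Ψ : (Fin k → ZMod 2) →ₗ[ZMod 2] (Fin n → ZMod 2) :=
    (LinearMap.pi fun j : Fin n => Polynomial.lcoeff (ZMod 2) (j : ℕ)).comp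
      ((LinearMap.mulLeft (ZMod 2) g₀).comp
        ((Polynomial.degreeLT (ZMod 2) k).subtype.comp e.symm.toLinearMap)) with hΨ
  have hΨapp : ∀ (q : Fin k → ZMod 2) (j : Fin n),
      Ψ q j = (g₀ * ((e.symm q : Polynomial.degreeLT (ZMod 2) k) : (ZMod 2)[X])).coeff (j : ℕ) :=
    fun q j => rfl
  have hPdeg : ∀ q : Fin k → ZMod 2,
      (((e.symm q : Polynomial.degreeLT (ZMod 2) k) : (ZMod 2)[X])).degree < (k : WithBot ℕ) :=
    fun q => Polynomial.mem_degreeLT.1 (e.symm q).2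
  have hmuldeg : ∀ q : Fin k → ZMod 2,
      (g₀ * ((e.symm q : Polynomial.degreeLT (ZMod 2) k) : (ZMod 2)[X])).degree
        < (n : WithBot ℕ) := by
    intro q
    set P := ((e.symm q : Polynomial.degreeLT (ZMod 2) k) : (ZMod 2)[X]) with hP
    by_cases hP0 : P = 0
    · rw [hP0, mul_zero, Polynomial.degree_zero]
      exact WithBot.bot_lt_coe n
    · have h1 : (g₀ * P).natDegree = g₀.natDegree + P.natDegree :=
        Polynomial.natDegree_mul hg₀ne hP0
      have h2 : P.natDegree < k := (Polynomial.natDegree_lt_iff_degree_lt hP0).2 (hPdeg q)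
      have h3 : (g₀ * P) ≠ 0 := mul_ne_zero hg₀ne hP0
      rw [← Polynomial.natDegree_lt_iff_degree_lt h3]
      omega
  -- injectivity
  have hinj : Function.Injective Ψ := by
    rw [← LinearMap.ker_eq_bot, LinearMap.ker_eq_bot']
    intro q hq0
    set P := ((e.symm q : Polynomial.degreeLT (ZMod 2) k) : (ZMod 2)[X]) with hP
    have hzero : g₀ * P = 0 := by
      ext i
      rw [Polynomial.coeff_zero]
      by_cases hi : i < n
      · have h1 := congrFun hq0 (⟨i, hi⟩ : Fin n)
        rw [hΨapp] at h1
        simpa using h1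
      · exact Polynomial.coeff_eq_zero_of_degree_lt
          (lt_of_lt_of_le (hmuldeg q) (Nat.cast_le.2 (le_of_not_gt hi)))
    have hP0 : P = 0 := by
      rcases mul_eq_zero.1 hzero with h | h
      · exact absurd h hg₀ne
      · exact h
    have hsq : e.symm q = 0 := Subtype.ext hP0
    calc q = e (e.symm q) := (e.apply_symm_apply q).symm
      _ = 0 := by rw [hsq, map_zero]
  -- range of Ψ is the code
  have hrange : C = LinearMap.range Ψ := by
    apply le_antisymm
    · intro c hcC
      obtain ⟨q, hq⟩ := (hmem c).1 hcC
      have hpcdeg : (∑ j : Fin n, Polynomial.C (c j) * X ^ (j : ℕ)).degree < (n : WithBot ℕ) :=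
        aux_degree_finsum c
      have hqdeg : q.degree < (k : WithBot ℕ) := by
        by_cases hq0 : q = 0
        · rw [hq0, Polynomial.degree_zero]
          exact WithBot.bot_lt_coe k
        · have hpc0 : (∑ j : Fin n, Polynomial.C (c j) * X ^ (j : ℕ)) ≠ 0 := by
            rw [hq]
            exact mul_ne_zero hg₀ne hq0
          have h1 := Polynomial.natDegree_mul hg₀ne hq0
          rw [← hq] at h1
          have h2 : (∑ j : Fin n, Polynomial.C (c j) * X ^ (j : ℕ)).natDegree < n :=
            (Polynomial.natDegree_lt_iff_degree_lt hpc0).2 hpcdeg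
          rw [← Polynomial.natDegree_lt_iff_degree_lt hq0]
          omega
      refine ⟨e ⟨q, Polynomial.mem_degreeLT.2 hqdeg⟩, ?_⟩
      funext j
      rw [hΨapp, e.symm_apply_apply]
      show (g₀ * q).coeff (j : ℕ) = c j
      rw [← hq, aux_coeff_finsum, dif_pos j.isLt]
    · rintro _ ⟨q, rfl⟩
      refine (hmem (Ψ q)).2 ?_
      have hPq : (∑ j : Fin n, Polynomial.C ((Ψ q) j) * X ^ (j : ℕ)) =
          g₀ * ((e.symm q : Polynomial.degreeLT (ZMod 2) k) : (ZMod 2)[X]) := by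
        calc ∑ j : Fin n, Polynomial.C ((Ψ q) j) * X ^ (j : ℕ)
            = ∑ j : Fin n, Polynomial.C
                ((g₀ * ((e.symm q : Polynomial.degreeLT (ZMod 2) k) : (ZMod 2)[X])).coeff (j : ℕ))
                * X ^ (j : ℕ) := by
              refine Finset.sum_congr rfl fun j _ => ?_
              rw [hΨapp]
          _ = _ := aux_sum_coeff _ n (hmuldeg q)
      rw [hPq]
      exact dvd_mul_right _ _
  rw [hrange, LinearMap.finrank_range_of_inj hinj, Module.finrank_pi, Fintype.card_fin]

lemma aux_vdm_no_kernel {F : Type*} [Field F] {w : ℕ} (hw : 0 < w) (β : Fin w → F)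
    (hβ : Function.Injective β) (hβ0 : ∀ s, β s ≠ 0) (b : ℕ)
    (h : ∀ t : Fin w, ∑ s, β s ^ (b + (t : ℕ)) = 0) : False := by
  set M : Matrix (Fin w) (Fin w) F := Matrix.of fun t s => β s ^ (b + (t : ℕ)) with hM
  set N : Matrix (Fin w) (Fin w) F :=
    Matrix.of fun s t => β s ^ b * (Matrix.vandermonde β) s t with hN
  have hMN : M = Nᵀ := by
    ext t s
    simp [hM, hN, Matrix.vandermonde, pow_add]
  have hdet : M.det ≠ 0 := by
    rw [hMN, Matrix.det_transpose, hN, Matrix.det_mul_column]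
    refine mul_ne_zero (Finset.prod_ne_zero_iff.2 fun s _ => pow_ne_zero _ (hβ0 s)) ?_
    rw [Matrix.det_vandermonde]
    refine Finset.prod_ne_zero_iff.2 fun i _ => Finset.prod_ne_zero_iff.2 fun j hj => ?_
    refine sub_ne_zero.2 fun hij => ?_
    have hji : j = i := hβ hij
    rw [Finset.mem_Ioi] at hj
    omega
  have hv : M.mulVec (fun _ => 1) = 0 := by
    funext t
    simpa [Matrix.mulVec, dotProduct, hM] using h t
  have h0 := Matrix.eq_zero_of_mulVec_eq_zero hdet hv
  have h1 : (1 : F) = 0 := congrFun h0 ⟨0, hw⟩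
  simp at h1



/-- Construction 2: let `3 ∣ m` and `n = 2^m − 1`. The binary cyclic code with
defining set `D = ⋃_{j<n/7} ({0,3,5,6} + 7j) ∪ C₁`, where `{0,3,5,6}` is the
defining set of the `[7,3,4]` Simplex code and `C₁ = {1,2,4,…,2^{m−1}}` is the
2-cyclotomic coset of 1 mod `n`, has dimension `3n/7 − m` and minimum distance at
least `12`. -/
theorem stmt18 (m : ℕ) (h3m : 3 ∣ m) (hm : 0 < m) (n : ℕ) (hn : n = 2 ^ m - 1)
    (F : Type*) [Field F] [CharP F 2] (α : F) (hα : IsPrimitiveRoot α n)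
    (D : Finset ℕ)
    (hD : D = (Finset.range (n / 7)).biUnion
        (fun j => ({0, 3, 5, 6} : Finset ℕ).image (fun x => x + 7 * j)) ∪
        (Finset.range m).image (fun j => 2 ^ j % n))
    (C : Submodule (ZMod 2) (Fin n → ZMod 2))
    (hC : (C : Set (Fin n → ZMod 2)) =
      {c | ∀ i ∈ D,
        ∑ j : Fin n, (ZMod.castHom (dvd_refl 2) F) (c j) * α ^ (i * (j : ℕ)) = 0}) :
    Module.finrank (ZMod 2) C = 3 * n / 7 - m ∧
    ∀ c ∈ C, c ≠ 0 → 12 ≤ hammingNorm c := by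
  classical
  have hm3 : 3 ≤ m := Nat.le_of_dvd hm h3m
  have hpm : 8 ≤ 2 ^ m := by
    calc (8 : ℕ) = 2 ^ 3 := by norm_num
      _ ≤ 2 ^ m := Nat.pow_le_pow_right (by norm_num) hm3
  have hn7 : 7 ≤ n := by omega
  have hn0 : 0 < n := by omega
  have h7n : 7 ∣ n := by
    obtain ⟨l, rfl⟩ := h3m
    have h := Nat.sub_dvd_pow_sub_pow (2 ^ 3) 1 l
    rw [← pow_mul] at h
    simpa [hn] using h
  have hodd : Odd n := by
    have h2 : (2 : ℕ) ∣ 2 ^ m := dvd_pow_self 2 hm.ne'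
    rw [Nat.odd_iff]; omega
  have hα1 : α ^ n = 1 := hα.pow_eq_one
  have hαmod : ∀ a : ℕ, α ^ (a % n) = α ^ a := by
    intro a
    conv_rhs => rw [← Nat.div_add_mod a n, pow_add, pow_mul, hα1, one_pow, one_mul]
  set B := (Finset.range (n / 7)).biUnion
      (fun j => ({0, 3, 5, 6} : Finset ℕ).image (fun x => x + 7 * j)) with hB
  have hBmem : ∀ x, x ∈ B ↔ x < n ∧ (x % 7 = 0 ∨ x % 7 = 3 ∨ x % 7 = 5 ∨ x % 7 = 6) := by
    intro x
    simp only [hB, Finset.mem_biUnion, Finset.mem_range, Finset.mem_image, Finset.mem_insert,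
      Finset.mem_singleton]
    constructor
    · rintro ⟨j, hj, r, hr, rfl⟩
      rcases hr with rfl | rfl | rfl | rfl <;> omega
    · rintro ⟨hx, hr⟩
      exact ⟨x / 7, by omega, x % 7, by omega, by omega⟩
  have hDpow : ∀ j, 2 ^ j % n ∈ D := by
    intro j
    have h1 : 2 ^ m % n = 1 % n := by
      have : 2 ^ m = n + 1 := by omega
      rw [this, Nat.add_mod_left]
    have h2 : 2 ^ j % n = 2 ^ (j % m) % n := by
      conv_lhs => rw [← Nat.div_add_mod j m, pow_add, pow_mul]
      calc (2 ^ m) ^ (j / m) * 2 ^ (j % m) % n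
          = 1 ^ (j / m) * 2 ^ (j % m) % n := Nat.ModEq.mul (Nat.ModEq.pow _ h1) rfl
        _ = 2 ^ (j % m) % n := by rw [one_pow, one_mul]
    rw [hD]
    apply Finset.mem_union_right
    rw [h2]
    exact Finset.mem_image.2 ⟨j % m, Finset.mem_range.2 (Nat.mod_lt _ hm), rfl⟩
  have hBD : ∀ x, x < n → (x % 7 = 0 ∨ x % 7 = 3 ∨ x % 7 = 5 ∨ x % 7 = 6) → x ∈ D := by
    intro x h1 h2
    rw [hD]
    exact Finset.mem_union_left _ ((hBmem x).2 ⟨h1, h2⟩)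
  have hDn : ∀ i ∈ D, i < n := by
    intro i hi
    rw [hD] at hi
    rcases Finset.mem_union.1 hi with h | h
    · exact ((hBmem i).1 h).1
    · obtain ⟨j, -, rfl⟩ := Finset.mem_image.1 h
      exact Nat.mod_lt _ hn0
  have hpow7 : ∀ j : ℕ, 2 ^ j % 7 = 1 ∨ 2 ^ j % 7 = 2 ∨ 2 ^ j % 7 = 4 := by
    intro j
    induction j with
    | zero => simp
    | succ i ih =>
      have h1 : 2 ^ (i + 1) % 7 = 2 ^ i % 7 * 2 % 7 := by
        rw [pow_succ, Nat.mul_mod]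
      omega
  have hDcl : ∀ i ∈ D, 2 * i % n ∈ D := by
    intro i hi
    rw [hD] at hi
    rcases Finset.mem_union.1 hi with h | h
    · obtain ⟨h1, h2⟩ := (hBmem i).1 h
      refine hBD _ (Nat.mod_lt _ hn0) ?_
      rw [Nat.mod_mod_of_dvd _ h7n, Nat.mul_mod]
      rcases h2 with h3 | h3 | h3 | h3 <;> rw [h3] <;> norm_num
    · obtain ⟨j, -, rfl⟩ := Finset.mem_image.1 h
      have hcong : 2 * (2 ^ j % n) ≡ 2 ^ (j + 1) [MOD n] := by
        rw [pow_succ, mul_comm (2 ^ j) 2]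
        exact (Nat.mod_modEq (2 ^ j) n).mul_left 2
      have heq : 2 * (2 ^ j % n) % n = 2 ^ (j + 1) % n := by
        simpa [Nat.ModEq, Nat.mod_mod_of_dvd] using hcong
      rw [heq]
      exact hDpow (j + 1)
  -- cardinality of D
  have hBcard : B.card = 4 * (n / 7) := by
    rw [hB, Finset.card_biUnion]
    · have hc : ∀ j ∈ Finset.range (n / 7),
          (({0, 3, 5, 6} : Finset ℕ).image (fun x => x + 7 * j)).card = 4 := by
        intro j _
        rw [Finset.card_image_of_injective _ (add_left_injective _)]
        decide
      rw [Finset.sum_congr rfl hc, Finset.sum_const, Finset.card_range]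
      ring
    · intro j hj j' hj' hne
      rw [Function.onFun, Finset.disjoint_left]
      intro a ha ha'
      simp only [Finset.mem_image, Finset.mem_insert, Finset.mem_singleton] at ha ha'
      obtain ⟨r, hr, rfl⟩ := ha
      obtain ⟨r', hr', he⟩ := ha'
      rcases hr with rfl | rfl | rfl | rfl <;> rcases hr' with rfl | rfl | rfl | rfl <;> omega
  have hC1card : ((Finset.range m).image (fun j => 2 ^ j % n)).card = m := by
    rw [Finset.card_image_of_injOn, Finset.card_range]
    intro a ha b hb hab
    have hab' : 2 ^ a % n = 2 ^ b % n := hab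
    simp only [Finset.coe_range, Set.mem_Iio] at ha hb
    have hlt : ∀ j, j < m → 2 ^ j < n := by
      intro j hj
      have h1 : 2 ^ (j + 1) ≤ 2 ^ m := Nat.pow_le_pow_right (by norm_num) (by omega)
      rw [pow_succ] at h1
      have h2 : 1 ≤ 2 ^ j := Nat.one_le_two_pow
      omega
    rw [Nat.mod_eq_of_lt (hlt a ha), Nat.mod_eq_of_lt (hlt b hb)] at hab'
    exact Nat.pow_right_injective (le_refl 2) hab'
  have hdisj : Disjoint B ((Finset.range m).image (fun j => 2 ^ j % n)) := by
    rw [Finset.disjoint_left]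
    intro a ha ha'
    obtain ⟨-, h7⟩ := (hBmem a).1 ha
    obtain ⟨j, -, rfl⟩ := Finset.mem_image.1 ha'
    have h1 : 2 ^ j % n % 7 = 2 ^ j % 7 := Nat.mod_mod_of_dvd _ h7n
    have h2 := hpow7 j
    omega
  have hDcard : D.card = 4 * (n / 7) + m := by
    rw [hD, Finset.card_union_of_disjoint hdisj, hBcard, hC1card]
  constructor
  · rw [aux_cyclic_dim hn0 hodd hα D hDn hDcl C hC, hDcard]
    omega
  -- minimum distance
  · intro c hcC hc0
    by_contra hlt
    push_neg at hlt
    set S := Finset.univ.filter (fun j : Fin n => c j ≠ 0) with hS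
    have hScard : S.card = hammingNorm c := rfl
    have hw11 : S.card ≤ 11 := by omega
    have hw0 : 0 < S.card := by
      rcases Function.ne_iff.1 hc0 with ⟨j, hj⟩
      refine Finset.card_pos.2 ⟨j, ?_⟩
      simp only [hS, Finset.mem_filter, Finset.mem_univ, true_and]
      simpa using hj
    set e := S.orderIsoOfFin rfl with he
    have hrun : ∀ t : ℕ, t < 11 → (n - 2 + t) % n ∈ D := by
      intro t ht
      have hres : ∀ u : ℕ, n - 2 + t = n + u → u % n ∈ D → (n - 2 + t) % n ∈ D := by
        intro u hu hmem
        rw [hu, Nat.add_mod_left]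
        exact hmem
      interval_cases t
      · exact hBD _ (Nat.mod_lt _ hn0) (by rw [Nat.mod_mod_of_dvd _ h7n]; omega)
      · exact hBD _ (Nat.mod_lt _ hn0) (by rw [Nat.mod_mod_of_dvd _ h7n]; omega)
      · exact hBD _ (Nat.mod_lt _ hn0) (by rw [Nat.mod_mod_of_dvd _ h7n]; omega)
      · exact hres 1 (by omega) (by simpa using hDpow 0)
      · exact hres 2 (by omega) (by simpa using hDpow 1)
      · exact hBD _ (Nat.mod_lt _ hn0) (by rw [Nat.mod_mod_of_dvd _ h7n]; omega)
      · exact hres 4 (by omega) (by simpa using hDpow 2)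
      · exact hBD _ (Nat.mod_lt _ hn0) (by rw [Nat.mod_mod_of_dvd _ h7n]; omega)
      · exact hBD _ (Nat.mod_lt _ hn0) (by rw [Nat.mod_mod_of_dvd _ h7n]; omega)
      · exact hBD _ (Nat.mod_lt _ hn0) (by rw [Nat.mod_mod_of_dvd _ h7n]; omega)
      · exact hres 8 (by omega) (by simpa using hDpow 3)
    have hcond : ∀ i ∈ D,
        ∑ j : Fin n, (ZMod.castHom (dvd_refl 2) F) (c j) * α ^ (i * (j : ℕ)) = 0 := by
      have h1 : c ∈ (C : Set (Fin n → ZMod 2)) := hcC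
      rw [hC] at h1
      exact h1
    have hone : ∀ x : ZMod 2, x ≠ 0 → x = 1 := by decide
    have key : ∀ t : Fin S.card,
        ∑ s : Fin S.card, (α ^ (((e s : Fin n)) : ℕ)) ^ ((n - 2) + (t : ℕ)) = 0 := by
      intro t
      have h1 := hcond _ (hrun t (by omega))
      have h2 : ∀ j : Fin n,
          α ^ ((n - 2 + (t : ℕ)) % n * (j : ℕ)) = (α ^ (j : ℕ)) ^ (n - 2 + (t : ℕ)) := by
        intro j
        calc α ^ ((n - 2 + (t : ℕ)) % n * (j : ℕ))
            = (α ^ ((n - 2 + (t : ℕ)) % n)) ^ (j : ℕ) := pow_mul α _ _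
          _ = (α ^ (n - 2 + (t : ℕ))) ^ (j : ℕ) := by rw [hαmod]
          _ = (α ^ (j : ℕ)) ^ (n - 2 + (t : ℕ)) := by
              rw [← pow_mul, mul_comm, pow_mul]
      rw [Finset.sum_congr rfl (fun j _ => by rw [h2 j])] at h1
      have h3 : ∑ j ∈ S, (α ^ (j : ℕ)) ^ (n - 2 + (t : ℕ)) = 0 := by
        calc ∑ j ∈ S, (α ^ (j : ℕ)) ^ (n - 2 + (t : ℕ))
            = ∑ j ∈ S, (ZMod.castHom (dvd_refl 2) F) (c j) * (α ^ (j : ℕ)) ^ (n - 2 + (t : ℕ)) := by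
              refine Finset.sum_congr rfl fun j hj => ?_
              have hj1 : c j ≠ 0 := (Finset.mem_filter.1 hj).2
              rw [hone _ hj1, RingHom.map_one, one_mul]
          _ = ∑ j : Fin n, (ZMod.castHom (dvd_refl 2) F) (c j) * (α ^ (j : ℕ)) ^ (n - 2 + (t : ℕ)) := by
              refine Finset.sum_subset (Finset.subset_univ S) fun x _ hx => ?_
              have hx0 : c x = 0 := by
                by_contra hx1
                exact hx (Finset.mem_filter.2 ⟨Finset.mem_univ x, hx1⟩)
              rw [hx0, RingHom.map_zero, zero_mul]
          _ = 0 := h1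
      calc ∑ s : Fin S.card, (α ^ (((e s : Fin n)) : ℕ)) ^ ((n - 2) + (t : ℕ))
          = ∑ j : {x // x ∈ S}, (α ^ (((j : Fin n)) : ℕ)) ^ ((n - 2) + (t : ℕ)) :=
            Fintype.sum_equiv e.toEquiv _ _ (fun s => rfl)
        _ = ∑ j ∈ S, (α ^ (j : ℕ)) ^ (n - 2 + (t : ℕ)) :=
            Finset.sum_coe_sort S (fun j : Fin n => (α ^ (j : ℕ)) ^ (n - 2 + (t : ℕ)))
        _ = 0 := h3
    have hαne : α ≠ 0 := by
      intro h0
      rw [h0, zero_pow hn0.ne'] at hα1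
      exact zero_ne_one hα1
    refine aux_vdm_no_kernel hw0 (fun s => α ^ (((e s : Fin n)) : ℕ)) ?_ ?_ (n - 2) key
    · intro s s' hss
      have h1 := hα.pow_inj (e s : Fin n).isLt (e s' : Fin n).isLt hss
      exact e.injective (Subtype.ext (Fin.ext h1))
    · intro s
      exact pow_ne_zero _ hαne
end
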